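/- arXiv:1207.2212 — 8 statements merged into one kernel-verified Lean document; each statement's English description precedes it below -/
import Mathlib

section
/- If f is h-convex on an interval I (i.e., f nonnegative and f(αx + (1-α)y) ≤ h(α)f(x) + h(1-α)f(y) for all x,y ∈ I, α ∈ (0,1), where h : J → ℝ is nonnegative, h ≠ 0, (0,1) ⊆ J), f ∈ L¹[a,b] with a < b, and h(1/2) > 0, then (1/(2h(1/2))) f((a+b)/2) ≤ (1/(b-a)) ∫ₐᵇ f(x) dx ≤ (f(a) + f(b)) ∫₀¹ h(t) dt. -/
open MeasureTheory

/-- `f` is `h`-convex on `S`: `f` is nonnegative and satisfies the `h`-convexity inequality. -/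
def HConvexOn (h : ℝ → ℝ) (S : Set ℝ) (f : ℝ → ℝ) : Prop :=
  (∀ x ∈ S, 0 ≤ f x) ∧
    ∀ x ∈ S, ∀ y ∈ S, ∀ t ∈ Set.Ioo (0:ℝ) 1,
      f (t * x + (1 - t) * y) ≤ h t * f x + h (1 - t) * f y

/-! The Hermite–Hadamard inequality comes from integrating the `h`-convexity inequality twice:
at `t = 1/2` along the pairs `x, a + b - x`, whose midpoint is `(a + b) / 2`, and along the
segment `t ↦ t * a + (1 - t) * b`, which parametrises `[a, b]` at constant speed `b - a`. -/

section Reparametrisation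

variable {E : Type*} [NormedAddCommGroup E] {f : ℝ → E} {a b : ℝ}

theorem IntervalIntegrable.comp_add_sub (hf : IntervalIntegrable f volume a b) :
    IntervalIntegrable (fun x => f (a + b - x)) volume a b := by
  simpa using (hf.comp_sub_left (a + b)).symm

theorem intervalIntegral.integral_comp_add_sub [NormedSpace ℝ E] (f : ℝ → E) (a b : ℝ) :
    ∫ x in a..b, f (a + b - x) = ∫ x in a..b, f x := by
  simp [intervalIntegral.integral_comp_sub_left]

theorem intervalIntegral.integral_comp_one_sub [NormedSpace ℝ E] (f : ℝ → E) :
    ∫ t in (0:ℝ)..1, f (1 - t) = ∫ t in (0:ℝ)..1, f t := by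
  have := intervalIntegral.integral_comp_add_sub f 0 1
  rwa [zero_add] at this

theorem IntervalIntegrable.comp_convexComb (hf : IntervalIntegrable f volume a b) :
    IntervalIntegrable (fun t => f (t * a + (1 - t) * b)) volume 0 1 := by
  rcases eq_or_ne a b with rfl | hab
  · simp only [show ∀ t : ℝ, t * a + (1 - t) * a = a by intro t; ring]
    exact intervalIntegrable_const
  have hshift : IntervalIntegrable (fun x => f (x + b)) volume (a - b) 0 := by
    simpa using hf.comp_add_right b
  have hscale := hshift.comp_mul_left (c := a - b)
  rw [div_self (sub_ne_zero.mpr hab), zero_div] at hscale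
  convert hscale.symm using 2
  ring_nf

theorem intervalIntegral.integral_comp_convexComb [NormedSpace ℝ E] (f : ℝ → E)
    (hab : a ≠ b) :
    ∫ t in (0:ℝ)..1, f (t * a + (1 - t) * b) = (b - a)⁻¹ • ∫ x in a..b, f x := by
  have hlin (t : ℝ) : t * a + (1 - t) * b = (a - b) * t + b := by ring
  simp_rw [hlin]
  rw [intervalIntegral.integral_comp_mul_add f (sub_ne_zero.mpr hab),
    intervalIntegral.integral_symm, smul_neg, ← neg_smul, ← inv_neg, neg_sub]
  simp

end Reparametrisation

namespace HConvexOn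

variable {h f : ℝ → ℝ}

theorem map_midpoint_le {S : Set ℝ} (hf : HConvexOn h S f) {x y : ℝ} (hx : x ∈ S)
    (hy : y ∈ S) :
    f ((x + y) / 2) ≤ h (1 / 2) * (f x + f y) := by
  have hhalf := hf.2 x hx y hy (1 / 2) ⟨by norm_num, by norm_num⟩
  rw [show (1 : ℝ) - 1 / 2 = 1 / 2 by norm_num] at hhalf
  convert hhalf using 2 <;> ring

variable {a b : ℝ}

theorem sub_mul_map_midpoint_le_integral (hf : HConvexOn h (Set.Icc a b) f) (hab : a ≤ b)
    (hfi : IntervalIntegrable f volume a b) :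
    (b - a) * f ((a + b) / 2) ≤ 2 * h (1 / 2) * ∫ x in a..b, f x := by
  have hpair (x : ℝ) (hx : x ∈ Set.Icc a b) :
      f ((a + b) / 2) ≤ h (1 / 2) * (f x + f (a + b - x)) := by
    have hx' : a + b - x ∈ Set.Icc a b := ⟨by linarith [hx.2], by linarith [hx.1]⟩
    simpa using hf.map_midpoint_le hx hx'
  calc (b - a) * f ((a + b) / 2) = ∫ _ in a..b, f ((a + b) / 2) := by simp
    _ ≤ ∫ x in a..b, h (1 / 2) * (f x + f (a + b - x)) :=
      intervalIntegral.integral_mono_on hab intervalIntegrable_const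
        ((hfi.add hfi.comp_add_sub).const_mul _) hpair
    _ = 2 * h (1 / 2) * ∫ x in a..b, f x := by
      rw [intervalIntegral.integral_const_mul, intervalIntegral.integral_add hfi hfi.comp_add_sub,
        intervalIntegral.integral_comp_add_sub]
      ring

theorem inv_sub_mul_integral_le (hf : HConvexOn h (Set.Icc a b) f) (hab : a < b)
    (hh : IntervalIntegrable h volume 0 1) (hfi : IntervalIntegrable f volume a b) :
    (b - a)⁻¹ * ∫ x in a..b, f x ≤ (f a + f b) * ∫ t in (0:ℝ)..1, h t := by
  have ha : a ∈ Set.Icc a b := Set.left_mem_Icc.mpr hab.le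
  have hb : b ∈ Set.Icc a b := Set.right_mem_Icc.mpr hab.le
  have hh' : IntervalIntegrable (fun t => h (1 - t)) volume 0 1 := by
    simpa using hh.comp_add_sub
  calc (b - a)⁻¹ * ∫ x in a..b, f x = ∫ t in (0:ℝ)..1, f (t * a + (1 - t) * b) :=
        (intervalIntegral.integral_comp_convexComb f hab.ne).symm
    _ ≤ ∫ t in (0:ℝ)..1, (h t * f a + h (1 - t) * f b) :=
      intervalIntegral.integral_mono_on_of_le_Ioo zero_le_one hfi.comp_convexComb
        ((hh.mul_const _).add (hh'.mul_const _)) fun t ht => hf.2 a ha b hb t ht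
    _ = (f a + f b) * ∫ t in (0:ℝ)..1, h t := by
      rw [intervalIntegral.integral_add (hh.mul_const _) (hh'.mul_const _),
        intervalIntegral.integral_mul_const, intervalIntegral.integral_mul_const,
        intervalIntegral.integral_comp_one_sub]
      ring

end HConvexOn

theorem stmt_1_general (h f : ℝ → ℝ) (a b : ℝ) (hab : a < b)
    (hhint : IntervalIntegrable h volume 0 1)
    (hconv : HConvexOn h (Set.Icc a b) f)
    (hfint : IntervalIntegrable f volume a b)
    (hhalf : 0 < h (1/2)) :
    (1 / (2 * h (1/2))) * f ((a + b) / 2) ≤ (1 / (b - a)) * ∫ x in a..b, f x ∧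
      (1 / (b - a)) * ∫ x in a..b, f x ≤ (f a + f b) * ∫ t in (0:ℝ)..1, h t := by
  have hba : 0 < b - a := sub_pos.mpr hab
  refine ⟨?_, by simpa using hconv.inv_sub_mul_integral_le hab hhint hfint⟩
  have hmid := hconv.sub_mul_map_midpoint_le_integral hab.le hfint
  rw [div_mul_eq_mul_div, div_mul_eq_mul_div, div_le_div_iff₀ (by positivity) hba]
  linarith

theorem stmt_1 (h f : ℝ → ℝ) (a b : ℝ) (hab : a < b)
    (hh0 : ∀ t ∈ Set.Ioo (0:ℝ) 1, 0 ≤ h t) (hhne : h ≠ 0)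
    (hhint : IntervalIntegrable h volume 0 1)
    (hconv : HConvexOn h (Set.Icc a b) f)
    (hfint : IntervalIntegrable f volume a b)
    (hhalf : 0 < h (1/2)) :
    (1 / (2 * h (1/2))) * f ((a + b) / 2) ≤ (1 / (b - a)) * ∫ x in a..b, f x ∧
      (1 / (b - a)) * ∫ x in a..b, f x ≤ (f a + f b) * ∫ t in (0:ℝ)..1, h t :=
  stmt_1_general h f a b hab hhint hconv hfint hhalf
end

section
/- Let f be differentiable on I° with f' integrable on [a,b], a < b, α,λ ∈ [0,1], q ≥ 1, and |f'|^q h-convex on [a,b]. Set γ₁ = (1-α)(αλ - (1-α)/2), γ₂ = (αλ)² - γ₁, υ₁ = (1-(1-α)²)/2 - α(1-λ(1-α)), υ₂ = (1+(1-α)²)/2 - (λ+1)(1-α)(1-λ(1-α)), A = |f'(b)|^q ∫₀^{1-α}|t-αλ| h(t) dt + |f'(a)|^q ∫₀^{1-α}|t-αλ| h(1-t) dt, B = |f'(b)|^q ∫_{1-α}^1 |t-1+λ(1-α)| h(t) dt + |f'(a)|^q ∫_{1-α}^1 |t-1+λ(1-α)| h(1-t) dt. If αλ ≤ 1-α ≤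 1-λ(1-α), then |λ(αf(a)+(1-α)f(b)) + (1-λ)f(αa+(1-α)b) - (1/(b-a))∫ₐᵇ f(x)dx| ≤ (b-a)[γ₂^{1-1/q} A^{1/q} + υ₂^{1-1/q} B^{1/q}]. -/
/-!
Substituting `x = a + (b - a) t` and integrating by parts on `[0, 1 - α]` and `[1 - α, 1]` against
the kernels `t - α l` and `t - (1 - l (1 - α))` expresses the left-hand side as `(b - a)` times the
sum of two kernel integrals of `f'(a + (b - a) t)`. On each piece the power-mean (weighted Hölder)
inequality with weight `|kernel|` separates the total weight, which is `γ₂` resp. `υ₂`, from the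
weighted integral of `|f'|^q`, and `h`-convexity of `|f'|^q` between `a` and `b` bounds the latter
by `A` resp. `B`.
-/

open MeasureTheory Set

lemma integral_mul_le_weighted_holder {α : Type*} [MeasurableSpace α] {μ : Measure α}
    {w F : α → ℝ} {q : ℝ} (hq : 1 ≤ q) (hw : 0 ≤ w) (hF : 0 ≤ F) (hw_int : Integrable w μ)
    (hF_meas : AEStronglyMeasurable F μ) (hwF_int : Integrable (fun x => w x * F x ^ q) μ) :
    ∫ x, w x * F x ∂μ ≤ (∫ x, w x ∂μ) ^ (1 - 1 / q) * (∫ x, w x * F x ^ q ∂μ) ^ (1 / q) := by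
  rcases hq.eq_or_lt with rfl | hq1
  · simp
  have hq0 : 0 < q := one_pos.trans hq1
  set p := q.conjExponent
  have hpq : p.HolderConjugate q := (Real.HolderConjugate.conjExponent hq1).symm
  have hp_inv : 1 / p = 1 - 1 / q := by
    rw [eq_sub_iff_add_eq]
    simpa [one_div] using hpq.inv_add_inv_eq_one
  -- Hölder applied to the factors of `w F = w^(1/p) · (w^(1/q) F)`
  set f₁ := fun x => w x ^ (1 / p)
  set f₂ := fun x => w x ^ (1 / q) * F x
  have hf₁ : ∀ x, f₁ x ^ p = w x := fun x => by
    rw [← Real.rpow_mul (hw x), one_div_mul_cancel hpq.pos.ne', Real.rpow_one]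
  have hf₂ : ∀ x, f₂ x ^ q = w x * F x ^ q := fun x => by
    rw [Real.mul_rpow (Real.rpow_nonneg (hw x) _) (hF x), ← Real.rpow_mul (hw x),
      one_div_mul_cancel hq0.ne', Real.rpow_one]
  have hf₁f₂ : ∀ x, f₁ x * f₂ x = w x * F x := fun x => by
    rw [← mul_assoc, ← Real.rpow_add' (hw x) (by rw [hp_inv]; simp), hp_inv, sub_add_cancel,
      Real.rpow_one]
  have hf₁_nn : 0 ≤ f₁ := fun x => Real.rpow_nonneg (hw x) _
  have hf₂_nn : 0 ≤ f₂ := fun x => mul_nonneg (Real.rpow_nonneg (hw x) _) (hF x)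
  have hf₁_Lp : MemLp f₁ (ENNReal.ofReal p) μ := by
    refine (integrable_norm_rpow_iff (f := f₁)
      (hw_int.1.aemeasurable.pow_const _).aestronglyMeasurable (by simpa using hpq.pos)
      ENNReal.ofReal_ne_top).1 ?_
    convert hw_int using 2 with x
    rw [ENNReal.toReal_ofReal hpq.nonneg, Real.norm_of_nonneg (hf₁_nn x), hf₁]
  have hf₂_Lq : MemLp f₂ (ENNReal.ofReal q) μ := by
    refine (integrable_norm_rpow_iff (f := f₂)
      ((hw_int.1.aemeasurable.pow_const _).aestronglyMeasurable.mul hF_meas) (by simpa using hq0)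
      ENNReal.ofReal_ne_top).1 ?_
    convert hwF_int using 2 with x
    rw [ENNReal.toReal_ofReal hq0.le, Real.norm_of_nonneg (hf₂_nn x), hf₂]
  have := integral_mul_le_Lp_mul_Lq_of_nonneg hpq (ae_of_all _ hf₁_nn) (ae_of_all _ hf₂_nn)
    hf₁_Lp hf₂_Lq
  simpa only [hf₁f₂, hf₁, hf₂, hp_inv] using this

lemma integral_mul_le_of_mul_rpow_le {α : Type*} [MeasurableSpace α] {μ : Measure α}
    {w F G : α → ℝ} {q : ℝ} (hq : 1 ≤ q) (hw : 0 ≤ w) (hF : 0 ≤ F) (hw_int : Integrable w μ)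
    (hF_meas : AEStronglyMeasurable F μ) (hG_int : Integrable G μ)
    (hle : ∀ᵐ x ∂μ, w x * F x ^ q ≤ G x) :
    ∫ x, w x * F x ∂μ ≤ (∫ x, w x ∂μ) ^ (1 - 1 / q) * (∫ x, G x ∂μ) ^ (1 / q) := by
  have hwF_nn : 0 ≤ fun x => w x * F x ^ q := fun x =>
    mul_nonneg (hw x) (Real.rpow_nonneg (hF x) q)
  have hwF_int : Integrable (fun x => w x * F x ^ q) μ := by
    refine hG_int.mono' (hw_int.1.mul (hF_meas.aemeasurable.pow_const q).aestronglyMeasurable) ?_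
    filter_upwards [hle] with x hx
    rwa [Real.norm_of_nonneg (hwF_nn x)]
  calc ∫ x, w x * F x ∂μ
      ≤ (∫ x, w x ∂μ) ^ (1 - 1 / q) * (∫ x, w x * F x ^ q ∂μ) ^ (1 / q) :=
        integral_mul_le_weighted_holder hq hw hF hw_int hF_meas hwF_int
    _ ≤ (∫ x, w x ∂μ) ^ (1 - 1 / q) * (∫ x, G x ∂μ) ^ (1 / q) := by
        refine mul_le_mul_of_nonneg_left ?_ (Real.rpow_nonneg (integral_nonneg hw) _)
        exact Real.rpow_le_rpow (integral_nonneg hwF_nn) (integral_mono_ae hwF_int hG_int hle)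
          (by positivity)

lemma abs_intervalIntegral_mul_le {w φ h₁ h₂ : ℝ → ℝ} {u v q Φ₁ Φ₂ : ℝ} (hq : 1 ≤ q)
    (huv : u ≤ v) (hw : Continuous w) (hφ : IntervalIntegrable φ volume u v)
    (hh₁ : IntervalIntegrable h₁ volume u v) (hh₂ : IntervalIntegrable h₂ volume u v)
    (hbound : ∀ t ∈ Ioo u v, |φ t| ^ q ≤ h₁ t * Φ₁ + h₂ t * Φ₂) :
    |∫ t in u..v, w t * φ t| ≤ (∫ t in u..v, |w t|) ^ (1 - 1 / q) *
      (Φ₁ * (∫ t in u..v, |w t| * h₁ t) + Φ₂ * ∫ t in u..v, |w t| * h₂ t) ^ (1 / q) := by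
  have hw_int : IntervalIntegrable (fun t => |w t|) volume u v :=
    (continuous_abs.comp hw).intervalIntegrable u v
  have hwh₁ : IntervalIntegrable (fun t => |w t| * h₁ t) volume u v :=
    hh₁.continuousOn_mul (continuous_abs.comp hw).continuousOn
  have hwh₂ : IntervalIntegrable (fun t => |w t| * h₂ t) volume u v :=
    hh₂.continuousOn_mul (continuous_abs.comp hw).continuousOn
  rw [intervalIntegrable_iff_integrableOn_Ioc_of_le huv] at hφ hw_int hwh₁ hwh₂
  simp only [intervalIntegral.integral_of_le huv]
  have hle : ∀ᵐ t ∂volume.restrict (Ioc u v), |w t| * |φ t| ^ q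
      ≤ Φ₁ * (|w t| * h₁ t) + Φ₂ * (|w t| * h₂ t) := by
    refine ae_restrict_of_ae_eq_of_ae_restrict Ioo_ae_eq_Ioc ?_
    filter_upwards [ae_restrict_mem measurableSet_Ioo] with t ht
    nlinarith [mul_le_mul_of_nonneg_left (hbound t ht) (abs_nonneg (w t))]
  calc |∫ t in Ioc u v, w t * φ t|
      ≤ ∫ t in Ioc u v, |w t| * |φ t| := by
        simpa only [abs_mul] using abs_integral_le_integral_abs (f := fun t => w t * φ t)
    _ ≤ _ := integral_mul_le_of_mul_rpow_le
        (G := fun t => Φ₁ * (|w t| * h₁ t) + Φ₂ * (|w t| * h₂ t)) hq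
        (fun _ => abs_nonneg _) (fun _ => abs_nonneg _) hw_int hφ.1.norm
        ((hwh₁.const_mul Φ₁).add (hwh₂.const_mul Φ₂)) hle
    _ = _ := by rw [integral_add (hwh₁.const_mul Φ₁) (hwh₂.const_mul Φ₂), integral_const_mul,
        integral_const_mul]

lemma intervalIntegral_abs_sub {u v m : ℝ} (hum : u ≤ m) (hmv : m ≤ v) :
    ∫ t in u..v, |t - m| = (m - u) ^ 2 / 2 + (v - m) ^ 2 / 2 := by
  have hcont : Continuous fun t : ℝ => |t - m| := by fun_prop
  rw [← intervalIntegral.integral_add_adjacent_intervals (hcont.intervalIntegrable u m)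
    (hcont.intervalIntegrable m v)]
  have h₁ : ∫ t in u..m, |t - m| = ∫ t in u..m, (m - t) := by
    refine intervalIntegral.integral_congr fun t ht => ?_
    rw [uIcc_of_le hum] at ht
    simp only [abs_of_nonpos (sub_nonpos.2 ht.2), neg_sub]
  have h₂ : ∫ t in m..v, |t - m| = ∫ t in m..v, (t - m) := by
    refine intervalIntegral.integral_congr fun t ht => ?_
    rw [uIcc_of_le hmv] at ht
    simp only [abs_of_nonneg (sub_nonneg.2 ht.1)]
  rw [h₁, h₂, intervalIntegral.integral_sub intervalIntegrable_const
    intervalIntegral.intervalIntegrable_id, intervalIntegral.integral_sub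
    intervalIntegral.intervalIntegrable_id intervalIntegrable_const]
  simp only [integral_id, intervalIntegral.integral_const, smul_eq_mul]
  ring

lemma sub_intervalIntegral_eq_kernel_integral {g g' : ℝ → ℝ} {c m₁ m₂ : ℝ}
    (hc₀ : 0 ≤ c) (hc₁ : c ≤ 1) (hg : ∀ t ∈ Icc (0 : ℝ) 1, HasDerivAt g (g' t) t)
    (hg' : IntervalIntegrable g' volume 0 1) :
    m₁ * g 0 + (m₂ - m₁) * g c + (1 - m₂) * g 1 - ∫ t in (0 : ℝ)..1, g t
      = (∫ t in (0 : ℝ)..c, (t - m₁) * g' t) + ∫ t in c..1, (t - m₂) * g' t := by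
  have hsub₁ : uIcc 0 c ⊆ Icc (0 : ℝ) 1 := by rw [uIcc_of_le hc₀]; exact Icc_subset_Icc le_rfl hc₁
  have hsub₂ : uIcc c 1 ⊆ Icc (0 : ℝ) 1 := by rw [uIcc_of_le hc₁]; exact Icc_subset_Icc hc₀ le_rfl
  have hg_cont : ContinuousOn g (Icc 0 1) := fun t ht => (hg t ht).continuousAt.continuousWithinAt
  have hparts : ∀ {u v m : ℝ}, uIcc u v ⊆ Icc 0 1 →
      ∫ t in u..v, (t - m) * g' t = (v - m) * g v - (u - m) * g u - ∫ t in u..v, g t := by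
    intro u v m huv
    simpa using intervalIntegral.integral_mul_deriv_eq_deriv_mul
      (fun t _ => (hasDerivAt_id t).sub_const m) (fun t ht => hg t (huv ht))
      intervalIntegrable_const (hg'.mono_set (by rwa [uIcc_of_le zero_le_one]))
  rw [hparts hsub₁, hparts hsub₂, ← intervalIntegral.integral_add_adjacent_intervals
    ((hg_cont.mono hsub₁).intervalIntegrable) ((hg_cont.mono hsub₂).intervalIntegrable)]
  ring

lemma IntervalIntegrable.comp_add_mul_sub {f : ℝ → ℝ} {a b : ℝ}
    (hf : IntervalIntegrable f volume a b) (hab : a ≠ b) :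
    IntervalIntegrable (fun t => f (a + (b - a) * t)) volume 0 1 := by
  simpa [sub_ne_zero.2 hab.symm] using (hf.comp_add_left a).comp_mul_left (c := b - a)

lemma sub_average_eq_kernel_integral {f f' : ℝ → ℝ} {a b c m₁ m₂ : ℝ} (hab : a < b)
    (hc₀ : 0 ≤ c) (hc₁ : c ≤ 1) (hf : ∀ x ∈ Icc a b, HasDerivAt f (f' x) x)
    (hf' : IntervalIntegrable f' volume a b) :
    m₁ * f a + (m₂ - m₁) * f (a + (b - a) * c) + (1 - m₂) * f b
        - (1 / (b - a)) * ∫ x in a..b, f x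
      = (b - a) * ((∫ t in (0 : ℝ)..c, (t - m₁) * f' (a + (b - a) * t))
          + ∫ t in c..1, (t - m₂) * f' (a + (b - a) * t)) := by
  have hba : b - a ≠ 0 := (sub_pos.2 hab).ne'
  have hg : ∀ t ∈ Icc (0 : ℝ) 1,
      HasDerivAt (fun t => f (a + (b - a) * t)) ((b - a) * f' (a + (b - a) * t)) t := by
    intro t ⟨ht₀, ht₁⟩
    have hmem : a + (b - a) * t ∈ Icc a b := ⟨by nlinarith, by nlinarith⟩
    have := (hf _ hmem).comp t (((hasDerivAt_id t).const_mul (b - a)).const_add a)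
    rwa [mul_one, mul_comm] at this
  have hg_avg : ∫ t in (0 : ℝ)..1, f (a + (b - a) * t) = (1 / (b - a)) * ∫ x in a..b, f x := by
    simp [intervalIntegral.integral_comp_add_mul f hba]
  have := sub_intervalIntegral_eq_kernel_integral (m₁ := m₁) (m₂ := m₂) hc₀ hc₁ hg
    ((hf'.comp_add_mul_sub hab.ne).const_mul (b - a))
  simp_rw [mul_left_comm _ (b - a), intervalIntegral.integral_const_mul] at this
  rw [← hg_avg, mul_add, ← this]
  simp

theorem stmt_2_general (I : Set ℝ) (h f f' : ℝ → ℝ) (a b α l q γ₁ γ₂ υ₂ A B : ℝ)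
    (hab : a < b) (hI : Set.Icc a b ⊆ interior I)
    (hα : α ∈ Set.Icc (0:ℝ) 1) (hl : l ∈ Set.Icc (0:ℝ) 1) (hq : 1 ≤ q)
    (hder : ∀ x ∈ interior I, HasDerivAt f (f' x) x)
    (hint : IntervalIntegrable f' volume a b)
    (hhint : IntervalIntegrable h volume 0 1)
    (hconv : ∀ x ∈ Set.Icc a b, ∀ y ∈ Set.Icc a b, ∀ t ∈ Set.Ioo (0:ℝ) 1,
      |f' (t * x + (1 - t) * y)| ^ q ≤ h t * |f' x| ^ q + h (1 - t) * |f' y| ^ q)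
    (hγ₁ : γ₁ = (1 - α) * (α * l - (1 - α) / 2))
    (hγ₂ : γ₂ = (α * l) ^ (2:ℕ) - γ₁)
    (hυ₂ : υ₂ = (1 + (1 - α) ^ (2:ℕ)) / 2 - (l + 1) * (1 - α) * (1 - l * (1 - α)))
    (hA : A = |f' b| ^ q * (∫ t in (0:ℝ)..(1 - α), |t - α * l| * h t)
        + |f' a| ^ q * ∫ t in (0:ℝ)..(1 - α), |t - α * l| * h (1 - t))
    (hB : B = |f' b| ^ q * (∫ t in (1 - α)..(1:ℝ), |t - 1 + l * (1 - α)| * h t)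
        + |f' a| ^ q * ∫ t in (1 - α)..(1:ℝ), |t - 1 + l * (1 - α)| * h (1 - t))
    (hcase₁ : α * l ≤ 1 - α) (hcase₂ : 1 - α ≤ 1 - l * (1 - α)) :
    |l * (α * f a + (1 - α) * f b) + (1 - l) * f (α * a + (1 - α) * b)
        - (1 / (b - a)) * ∫ x in a..b, f x|
      ≤ (b - a) * (γ₂ ^ (1 - 1/q) * A ^ (1/q) + υ₂ ^ (1 - 1/q) * B ^ (1/q)) := by
  obtain ⟨hα₀, hα₁⟩ := hα
  obtain ⟨hl₀, hl₁⟩ := hl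
  have hc₀ : 0 ≤ 1 - α := by linarith
  have hc₁ : 1 - α ≤ 1 := by linarith
  have hsub₁ : uIcc 0 (1 - α) ⊆ uIcc (0 : ℝ) 1 := uIcc_subset_uIcc_left (by simp [hc₀, hc₁])
  have hsub₂ : uIcc (1 - α) 1 ⊆ uIcc (0 : ℝ) 1 := uIcc_subset_uIcc_right (by simp [hc₀, hc₁])
  have hφ := hint.comp_add_mul_sub hab.ne
  have hh' : IntervalIntegrable (fun t => h (1 - t)) volume 0 1 := by
    simpa using (hhint.comp_sub_left 1).symm
  have hbound : ∀ t ∈ Ioo (0 : ℝ) 1,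
      |f' (a + (b - a) * t)| ^ q ≤ h t * |f' b| ^ q + h (1 - t) * |f' a| ^ q := fun t ht => by
    convert hconv b (right_mem_Icc.2 hab.le) a (left_mem_Icc.2 hab.le) t ht using 4; ring
  have hleft := abs_intervalIntegral_mul_le (w := fun t => t - α * l) hq hc₀ (by fun_prop)
    (hφ.mono_set hsub₁) (hhint.mono_set hsub₁) (hh'.mono_set hsub₁)
    fun t ht => hbound t (Ioo_subset_Ioo le_rfl hc₁ ht)
  have hright := abs_intervalIntegral_mul_le (w := fun t => t - 1 + l * (1 - α)) hq hc₁
    (by fun_prop) (hφ.mono_set hsub₂) (hhint.mono_set hsub₂) (hh'.mono_set hsub₂)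
    fun t ht => hbound t (Ioo_subset_Ioo hc₀ le_rfl ht)
  have hγ : ∫ t in (0 : ℝ)..(1 - α), |t - α * l| = γ₂ := by
    rw [intervalIntegral_abs_sub (mul_nonneg hα₀ hl₀) hcase₁, hγ₂, hγ₁]
    ring
  rw [hγ, ← hA] at hleft
  have hυ : ∫ t in (1 - α)..1, |t - 1 + l * (1 - α)| = υ₂ := by
    simp only [sub_add]
    rw [intervalIntegral_abs_sub hcase₂ (by nlinarith), hυ₂]
    ring
  rw [hυ, ← hB] at hright
  simp only [sub_add] at hright
  rw [show l * (α * f a + (1 - α) * f b) + (1 - l) * f (α * a + (1 - α) * b)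
      = α * l * f a + (1 - l * (1 - α) - α * l) * f (a + (b - a) * (1 - α))
        + (1 - (1 - l * (1 - α))) * f b by ring_nf,
    sub_average_eq_kernel_integral hab hc₀ hc₁ (fun x hx => hder x (hI hx)) hint,
    abs_mul, abs_of_pos (sub_pos.2 hab)]
  gcongr
  exact (abs_add_le _ _).trans (add_le_add hleft hright)

theorem stmt_2 (I : Set ℝ) (h f f' : ℝ → ℝ) (a b α l q γ₁ γ₂ υ₂ A B : ℝ)
    (hab : a < b) (hI : Set.Icc a b ⊆ interior I)
    (hα : α ∈ Set.Icc (0:ℝ) 1) (hl : l ∈ Set.Icc (0:ℝ) 1) (hq : 1 ≤ q)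
    (hder : ∀ x ∈ interior I, HasDerivAt f (f' x) x)
    (hint : IntervalIntegrable f' volume a b)
    (hh0 : ∀ t ∈ Set.Ioo (0:ℝ) 1, 0 ≤ h t) (hhne : h ≠ 0)
    (hhint : IntervalIntegrable h volume 0 1)
    (hconv : ∀ x ∈ Set.Icc a b, ∀ y ∈ Set.Icc a b, ∀ t ∈ Set.Ioo (0:ℝ) 1,
      |f' (t * x + (1 - t) * y)| ^ q ≤ h t * |f' x| ^ q + h (1 - t) * |f' y| ^ q)
    (hγ₁ : γ₁ = (1 - α) * (α * l - (1 - α) / 2))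
    (hγ₂ : γ₂ = (α * l) ^ (2:ℕ) - γ₁)
    (hυ₂ : υ₂ = (1 + (1 - α) ^ (2:ℕ)) / 2 - (l + 1) * (1 - α) * (1 - l * (1 - α)))
    (hA : A = |f' b| ^ q * (∫ t in (0:ℝ)..(1 - α), |t - α * l| * h t)
        + |f' a| ^ q * ∫ t in (0:ℝ)..(1 - α), |t - α * l| * h (1 - t))
    (hB : B = |f' b| ^ q * (∫ t in (1 - α)..(1:ℝ), |t - 1 + l * (1 - α)| * h t)
        + |f' a| ^ q * ∫ t in (1 - α)..(1:ℝ), |t - 1 + l * (1 - α)| * h (1 - t))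
    (hcase₁ : α * l ≤ 1 - α) (hcase₂ : 1 - α ≤ 1 - l * (1 - α)) :
    |l * (α * f a + (1 - α) * f b) + (1 - l) * f (α * a + (1 - α) * b)
        - (1 / (b - a)) * ∫ x in a..b, f x|
      ≤ (b - a) * (γ₂ ^ (1 - 1/q) * A ^ (1/q) + υ₂ ^ (1 - 1/q) * B ^ (1/q)) :=
  stmt_2_general I h f f' a b α l q γ₁ γ₂ υ₂ A B hab hI hα hl hq hder hint hhint hconv hγ₁ hγ₂ hυ₂
    hA hB hcase₁ hcase₂
end

section
/- Let f be differentiable on I° with f' integrable on [a,b], a < b, α,λ ∈ [0,1], q = 1, and |f'| h-convex on [a,b]. Then |λ(αf(a)+(1-α)f(b)) + (1-λ)f(αa+(1-α)b) - (1/(b-a))∫ₐᵇ f(x)dx| ≤ (b-a){|f'(b)|[∫₀^{1-α}|t-αλ| h(t)dt + ∫_{1-α}^1|t-1+λ(1-α)| h(t)dt] + |f'(a)|[∫₀^{1-α}|t-αλ| h(1-t)dt + ∫_{1-α}^1|t-1+λ(1-α)| h(1-t)dt]}. -/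
/-!
Rescale to `F t = f ((b - a) t + a)` on `[0, 1]`. Integrating by parts against the kernel
`t - α λ` on `[0, 1 - α]` and `t - 1 + λ (1 - α)` on `[1 - α, 1]` writes the left-hand side as
`|∫ K F'|`, and h-convexity of `|f'|` gives `|F' t| ≤ (b - a) (h t |f' b| + h (1 - t) |f' a|)`.
-/

open MeasureTheory Set intervalIntegral

theorem integral_sub_mul_deriv_eq {F F' : ℝ → ℝ} {p q : ℝ} (r : ℝ)
    (hF : ∀ t ∈ uIcc p q, HasDerivAt F (F' t) t) (hF' : IntervalIntegrable F' volume p q) :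
    ∫ t in p..q, (t - r) * F' t = (q - r) * F q - (p - r) * F p - ∫ t in p..q, F t := by
  simpa using integral_mul_deriv_eq_deriv_mul (fun t _ => (hasDerivAt_id t).sub_const r) hF
    intervalIntegrable_const hF'

theorem abs_integral_mul_le_integral_abs_mul {k g G : ℝ → ℝ} {p q : ℝ} (hpq : p ≤ q)
    (hk : Continuous k) (hG : IntervalIntegrable G volume p q) (hg : ∀ t ∈ Ioo p q, |g t| ≤ G t) :
    |∫ t in p..q, k t * g t| ≤ ∫ t in p..q, |k t| * G t := by
  rw [← Real.norm_eq_abs]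
  refine norm_integral_le_of_norm_le hpq ?_ (hG.continuousOn_mul hk.abs.continuousOn)
  filter_upwards [Measure.ae_ne volume q] with t htq ht
  rw [Real.norm_eq_abs, abs_mul]
  exact mul_le_mul_of_nonneg_left (hg t ⟨ht.1, ht.2.lt_of_ne htq⟩) (abs_nonneg _)

theorem abs_integral_mul_le_of_abs_le_hConvex_bound {k F' h : ℝ → ℝ} {p q : ℝ} (c A B : ℝ)
    (hp : 0 ≤ p) (hpq : p ≤ q) (hq : q ≤ 1) (hk : Continuous k)
    (hh : IntervalIntegrable h volume 0 1)
    (hF' : ∀ t ∈ Ioo 0 1, |F' t| ≤ c * (h t * B + h (1 - t) * A)) :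
    |∫ t in p..q, k t * F' t|
      ≤ c * (B * (∫ t in p..q, |k t| * h t) + A * ∫ t in p..q, |k t| * h (1 - t)) := by
  have hsub : uIcc p q ⊆ uIcc 0 1 := by
    rw [uIcc_of_le hpq, uIcc_of_le zero_le_one]; exact Icc_subset_Icc hp hq
  have hh₁ : IntervalIntegrable h volume p q := hh.mono_set hsub
  have hh₂ : IntervalIntegrable (fun t => h (1 - t)) volume p q := by
    have hrefl : IntervalIntegrable (fun t => h (1 - t)) volume 0 1 := by
      simpa using (hh.comp_sub_left 1).symm
    exact hrefl.mono_set hsub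
  have hk' : ContinuousOn (fun t => |k t|) (uIcc p q) := hk.abs.continuousOn
  calc |∫ t in p..q, k t * F' t|
      ≤ ∫ t in p..q, |k t| * (c * (h t * B + h (1 - t) * A)) :=
        abs_integral_mul_le_integral_abs_mul hpq hk
          (((hh₁.mul_const B).add (hh₂.mul_const A)).const_mul c)
          fun t ht => hF' t ⟨hp.trans_lt ht.1, ht.2.trans_le hq⟩
    _ = ∫ t in p..q, (c * B) * (|k t| * h t) + (c * A) * (|k t| * h (1 - t)) := by
        congr 1; funext t; ring
    _ = c * (B * (∫ t in p..q, |k t| * h t) + A * ∫ t in p..q, |k t| * h (1 - t)) := by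
        rw [integral_add ((hh₁.continuousOn_mul hk').const_mul _)
          ((hh₂.continuousOn_mul hk').const_mul _), intervalIntegral.integral_const_mul,
          intervalIntegral.integral_const_mul]
        ring

theorem combination_sub_integral_eq_integral_kernel_mul_deriv {F F' : ℝ → ℝ} {α : ℝ} (l : ℝ)
    (hα : α ∈ Icc (0 : ℝ) 1) (hF : ∀ t ∈ Icc (0 : ℝ) 1, HasDerivAt F (F' t) t)
    (hF' : IntervalIntegrable F' volume 0 1) :
    l * (α * F 0 + (1 - α) * F 1) + (1 - l) * F (1 - α) - ∫ t in (0 : ℝ)..1, F t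
      = (∫ t in (0 : ℝ)..(1 - α), (t - α * l) * F' t)
        + ∫ t in (1 - α)..(1 : ℝ), (t - 1 + l * (1 - α)) * F' t := by
  have hm : 1 - α ∈ Icc (0 : ℝ) 1 := ⟨by linarith [hα.2], by linarith [hα.1]⟩
  have hFc : ContinuousOn F (Icc 0 1) := fun t ht => (hF t ht).continuousAt.continuousWithinAt
  have hFi {p q : ℝ} (hp : p ∈ Icc (0 : ℝ) 1) (hq : q ∈ Icc (0 : ℝ) 1) :
      IntervalIntegrable F volume p q :=
    (hFc.mono (uIcc_subset_Icc hp hq)).intervalIntegrable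
  have hibp {p q : ℝ} (r : ℝ) (hp : p ∈ Icc (0 : ℝ) 1) (hq : q ∈ Icc (0 : ℝ) 1) :=
    integral_sub_mul_deriv_eq r (fun t ht => hF t (uIcc_subset_Icc hp hq ht))
      (hF'.mono_set (by rw [uIcc_of_le zero_le_one]; exact uIcc_subset_Icc hp hq))
  have h0 : (0 : ℝ) ∈ Icc (0 : ℝ) 1 := left_mem_Icc.2 zero_le_one
  have h1 : (1 : ℝ) ∈ Icc (0 : ℝ) 1 := right_mem_Icc.2 zero_le_one
  have hkernel : ∫ t in (1 - α)..(1 : ℝ), (t - 1 + l * (1 - α)) * F' t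
      = ∫ t in (1 - α)..(1 : ℝ), (t - (1 - l * (1 - α))) * F' t := by
    congr 1; funext t; ring
  rw [hkernel, hibp _ h0 hm, hibp _ hm h1,
    ← integral_add_adjacent_intervals (hFi h0 hm) (hFi hm h1)]
  ring

theorem abs_combination_sub_integral_le_of_abs_deriv_le {F F' h : ℝ → ℝ} {α : ℝ} (l c A B : ℝ)
    (hα : α ∈ Icc (0 : ℝ) 1) (hF : ∀ t ∈ Icc (0 : ℝ) 1, HasDerivAt F (F' t) t)
    (hF' : IntervalIntegrable F' volume 0 1) (hh : IntervalIntegrable h volume 0 1)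
    (hbound : ∀ t ∈ Ioo (0 : ℝ) 1, |F' t| ≤ c * (h t * B + h (1 - t) * A)) :
    |l * (α * F 0 + (1 - α) * F 1) + (1 - l) * F (1 - α) - ∫ t in (0 : ℝ)..1, F t|
      ≤ c * (B * ((∫ t in (0 : ℝ)..(1 - α), |t - α * l| * h t)
          + ∫ t in (1 - α)..(1 : ℝ), |t - 1 + l * (1 - α)| * h t)
        + A * ((∫ t in (0 : ℝ)..(1 - α), |t - α * l| * h (1 - t))
          + ∫ t in (1 - α)..(1 : ℝ), |t - 1 + l * (1 - α)| * h (1 - t))) := by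
  have hm₀ : 0 ≤ 1 - α := by linarith [hα.2]
  have hm₁ : 1 - α ≤ 1 := by linarith [hα.1]
  rw [combination_sub_integral_eq_integral_kernel_mul_deriv l hα hF hF']
  refine (abs_add_le _ _).trans ?_
  have hleft := abs_integral_mul_le_of_abs_le_hConvex_bound (k := fun t => t - α * l) c A B
    le_rfl hm₀ hm₁ (by fun_prop) hh hbound
  have hright := abs_integral_mul_le_of_abs_le_hConvex_bound
    (k := fun t => t - 1 + l * (1 - α)) c A B hm₀ hm₁ le_rfl (by fun_prop) hh hbound
  linarith

theorem stmt_3_general (I : Set ℝ) (h f f' : ℝ → ℝ) (a b α l : ℝ)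
    (hab : a < b) (hI : Set.Icc a b ⊆ interior I)
    (hα : α ∈ Set.Icc (0:ℝ) 1)
    (hder : ∀ x ∈ interior I, HasDerivAt f (f' x) x)
    (hint : IntervalIntegrable f' volume a b)
    (hhint : IntervalIntegrable h volume 0 1)
    (hconv : ∀ x ∈ Set.Icc a b, ∀ y ∈ Set.Icc a b, ∀ t ∈ Set.Ioo (0:ℝ) 1,
      |f' (t * x + (1 - t) * y)| ≤ h t * |f' x| + h (1 - t) * |f' y|) :
    |l * (α * f a + (1 - α) * f b) + (1 - l) * f (α * a + (1 - α) * b)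
        - (1 / (b - a)) * ∫ x in a..b, f x|
      ≤ (b - a) * (|f' b| * ((∫ t in (0:ℝ)..(1 - α), |t - α * l| * h t)
          + ∫ t in (1 - α)..(1:ℝ), |t - 1 + l * (1 - α)| * h t)
        + |f' a| * ((∫ t in (0:ℝ)..(1 - α), |t - α * l| * h (1 - t))
          + ∫ t in (1 - α)..(1:ℝ), |t - 1 + l * (1 - α)| * h (1 - t))) := by
  have hba : 0 < b - a := sub_pos.2 hab
  have hmem {t : ℝ} (ht : t ∈ Icc (0 : ℝ) 1) : (b - a) * t + a ∈ Icc a b :=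
    ⟨by nlinarith [ht.1], by nlinarith [ht.2]⟩
  have hF (t : ℝ) (ht : t ∈ Icc (0 : ℝ) 1) : HasDerivAt (fun s => f ((b - a) * s + a))
      ((b - a) * f' ((b - a) * t + a)) t := by
    have hlin : HasDerivAt (fun s => (b - a) * s + a) (b - a) t := by
      simpa using ((hasDerivAt_id t).const_mul (b - a)).add_const a
    rw [mul_comm]
    exact (hder _ (hI (hmem ht))).comp t hlin
  have hF' : IntervalIntegrable (fun t => (b - a) * f' ((b - a) * t + a)) volume 0 1 := by
    have hcomp : IntervalIntegrable (fun t => f' ((b - a) * t + a)) volume 0 1 := by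
      simpa [hba.ne'] using (hint.comp_add_right a).comp_mul_left (c := b - a)
    exact hcomp.const_mul (b - a)
  have hbound (t : ℝ) (ht : t ∈ Ioo (0 : ℝ) 1) : |(b - a) * f' ((b - a) * t + a)|
      ≤ (b - a) * (h t * |f' b| + h (1 - t) * |f' a|) := by
    have := hconv b (right_mem_Icc.2 hab.le) a (left_mem_Icc.2 hab.le) t ht
    rw [abs_mul, abs_of_pos hba, show (b - a) * t + a = t * b + (1 - t) * a by ring]
    exact mul_le_mul_of_nonneg_left this hba.le
  have key := abs_combination_sub_integral_le_of_abs_deriv_le l _ _ _ hα hF hF' hhint hbound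
  rwa [intervalIntegral.integral_comp_mul_add (fun x => f x) hba.ne', mul_zero, zero_add, mul_one,
    sub_add_cancel, show (b - a) * (1 - α) + a = α * a + (1 - α) * b by ring, smul_eq_mul,
    ← one_div] at key

theorem stmt_3 (I : Set ℝ) (h f f' : ℝ → ℝ) (a b α l : ℝ)
    (hab : a < b) (hI : Set.Icc a b ⊆ interior I)
    (hα : α ∈ Set.Icc (0:ℝ) 1) (hl : l ∈ Set.Icc (0:ℝ) 1)
    (hder : ∀ x ∈ interior I, HasDerivAt f (f' x) x)
    (hint : IntervalIntegrable f' volume a b)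
    (hh0 : ∀ t ∈ Set.Ioo (0:ℝ) 1, 0 ≤ h t)
    (hhint : IntervalIntegrable h volume 0 1)
    (hconv : ∀ x ∈ Set.Icc a b, ∀ y ∈ Set.Icc a b, ∀ t ∈ Set.Ioo (0:ℝ) 1,
      |f' (t * x + (1 - t) * y)| ≤ h t * |f' x| + h (1 - t) * |f' y|) :
    |l * (α * f a + (1 - α) * f b) + (1 - l) * f (α * a + (1 - α) * b)
        - (1 / (b - a)) * ∫ x in a..b, f x|
      ≤ (b - a) * (|f' b| * ((∫ t in (0:ℝ)..(1 - α), |t - α * l| * h t)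
          + ∫ t in (1 - α)..(1:ℝ), |t - 1 + l * (1 - α)| * h t)
        + |f' a| * ((∫ t in (0:ℝ)..(1 - α), |t - α * l| * h (1 - t))
          + ∫ t in (1 - α)..(1:ℝ), |t - 1 + l * (1 - α)| * h (1 - t))) :=
  stmt_3_general I h f f' a b α l hab hI hα hder hint hhint hconv
end

section
/- Let f be differentiable on I° with f' integrable on [a,b], a < b, q ≥ 1, and |f'|^q s-convex in the second sense on [a,b] for some s ∈ (0,1]. Then the Simpson-type inequality holds: |(1/6)[f(a) + 4f((a+b)/2) + f(b)] - (1/(b-a))∫ₐᵇ f(x)dx| ≤ ((b-a)/2)(5/36)^{1-1/q} · { ( ((2s+1)3^{s+1}+2)/(3·6^{s+1}(s+1)(s+2)) |f'(b)|^q + (2·5^{s+2}+(s-4)6^{s+1}-(2s+7)3^{s+1})/(3·6^{s+1}(s+1)(s+2)) |f'(a)|^q )^{1/q} + ( (2·5^{s+2}+(s-4)6^{s+1}-(2s+7)3^{s+1})/(3·6^{s+1}(s+1)(s+2)) |f'(b)|^q + ((2s+1)3^{s+1}+2)/(3·6^{s+1}(s+1)(s+2)) |f'(a)|^q )^{1/q}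 }. -/
/-!
Integrating by parts against the Simpson kernel, `x - (5a+b)/6` on the left half of `[a, b]` and
`x - (a+5b)/6` on the right half, writes the Simpson error as `(b - a) (J(a,b) - J(b,a))` with
`J(x,y) = ∫_{1/2}^1 (5/6 - t) f'(t x + (1-t) y) dt`. Hölder's inequality with weight `|5/6 - t|`,
followed by s-convexity `|f'(t x + (1-t) y)|^q ≤ t^s |f' x|^q + (1-t)^s |f' y|^q`, bounds
`|J(x,y)|` by moments of the weight, which are computed in closed form.
-/

open MeasureTheory Set

lemma add_div_two_mem_uIcc (a b : ℝ) : (a + b) / 2 ∈ uIcc a b := by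
  rcases le_total a b with h | h
  · exact mem_uIcc.2 (Or.inl ⟨by linarith, by linarith⟩)
  · exact mem_uIcc.2 (Or.inr ⟨by linarith, by linarith⟩)

theorem integral_sub_mul_deriv_eq_simpson_half {f f' : ℝ → ℝ} {a b : ℝ}
    (hf : ∀ x ∈ uIcc a b, HasDerivAt f (f' x) x) (hf' : IntervalIntegrable f' volume a b) :
    ∫ x in a..(a + b) / 2, (x - (5 * a + b) / 6) * f' x
      = (b - a) / 6 * f a + (b - a) / 3 * f ((a + b) / 2) - ∫ x in a..(a + b) / 2, f x := by
  have hsub : uIcc a ((a + b) / 2) ⊆ uIcc a b := uIcc_subset_uIcc_left (add_div_two_mem_uIcc a b)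
  rw [intervalIntegral.integral_mul_deriv_eq_deriv_mul (u := fun x => x - (5 * a + b) / 6)
    (u' := fun _ => 1) (fun x _ => (hasDerivAt_id x).sub_const _) (fun x hx => hf x (hsub hx))
    intervalIntegrable_const (hf'.mono_set hsub)]
  simp only [one_mul]
  ring

theorem simpson_half_identity {f f' : ℝ → ℝ} {a b : ℝ} (hab : a ≠ b)
    (hf : ∀ x ∈ uIcc a b, HasDerivAt f (f' x) x) (hf' : IntervalIntegrable f' volume a b) :
    (b - a) * ∫ t in (1/2 : ℝ)..1, (5/6 - t) * f' (t * a + (1 - t) * b)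
      = f a / 6 + f ((a + b) / 2) / 3 - 1 / (b - a) * ∫ x in a..(a + b) / 2, f x := by
  have hab' : a - b ≠ 0 := sub_ne_zero.2 hab
  have hcov : ∫ t in (1/2 : ℝ)..1, (5/6 - t) * f' (t * a + (1 - t) * b)
      = ∫ t in (1/2 : ℝ)..1,
          (fun x => (b - a)⁻¹ * ((x - (5 * a + b) / 6) * f' x)) ((a - b) * t + b) := by
    refine intervalIntegral.integral_congr fun t _ => ?_
    beta_reduce
    rw [show t * a + (1 - t) * b = (a - b) * t + b by ring]
    field_simp
    ring
  rw [hcov, intervalIntegral.integral_comp_mul_add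
    (fun x => (b - a)⁻¹ * ((x - (5 * a + b) / 6) * f' x)) hab',
    intervalIntegral.integral_const_mul,
    show (a - b) * (1/2) + b = (a + b) / 2 by ring, show (a - b) * 1 + b = a by ring,
    intervalIntegral.integral_symm, integral_sub_mul_deriv_eq_simpson_half hf hf', smul_eq_mul]
  field_simp
  ring

theorem simpson_identity {f f' : ℝ → ℝ} {a b : ℝ} (hab : a ≠ b)
    (hf : ∀ x ∈ uIcc a b, HasDerivAt f (f' x) x) (hf' : IntervalIntegrable f' volume a b) :
    1/6 * (f a + 4 * f ((a + b) / 2) + f b) - 1 / (b - a) * ∫ x in a..b, f x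
      = (b - a) * ((∫ t in (1/2 : ℝ)..1, (5/6 - t) * f' (t * a + (1 - t) * b))
          - ∫ t in (1/2 : ℝ)..1, (5/6 - t) * f' (t * b + (1 - t) * a)) := by
  have hfc : ContinuousOn f (uIcc a b) := fun x hx => (hf x hx).continuousAt.continuousWithinAt
  have hm := add_div_two_mem_uIcc a b
  have hleft := simpson_half_identity hab hf hf'
  have hright := simpson_half_identity hab.symm (uIcc_comm a b ▸ hf) hf'.symm
  rw [add_comm b a, intervalIntegral.integral_symm ((a + b) / 2) b,
    show 1 / (a - b) = -(1 / (b - a)) by rw [← neg_sub, one_div_neg_eq_neg_one_div]] at hright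
  rw [← intervalIntegral.integral_add_adjacent_intervals (b := (a + b) / 2)
    ((hfc.mono (uIcc_subset_uIcc_left hm)).intervalIntegrable)
    ((hfc.mono (uIcc_subset_uIcc_right hm)).intervalIntegrable)]
  linear_combination -hleft - hright

section WeightedHolder

variable {α : Type*} [MeasurableSpace α] {μ : Measure α}

lemma memLp_ofReal_of_integrable_rpow {F : α → ℝ} {p : ℝ} (hp : 0 < p) (hF : 0 ≤ F)
    (hFm : AEStronglyMeasurable F μ) (hFp : Integrable (fun x => F x ^ p) μ) :
    MemLp F (ENNReal.ofReal p) μ := by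
  refine (integrable_norm_rpow_iff hFm (by simpa using hp) ENNReal.ofReal_ne_top).mp ?_
  simpa only [ENNReal.toReal_ofReal hp.le, Real.norm_of_nonneg (hF _)] using hFp

theorem integral_mul_le_weight_mul_Lp_of_nonneg {w h : α → ℝ} {q : ℝ} (hq : 1 ≤ q)
    (hw : 0 ≤ w) (hh : 0 ≤ h) (hwi : Integrable w μ)
    (hwhq : Integrable (fun x => w x * h x ^ q) μ) (hhm : AEStronglyMeasurable h μ) :
    ∫ x, w x * h x ∂μ
      ≤ (∫ x, w x ∂μ) ^ (1 - 1/q) * (∫ x, w x * h x ^ q ∂μ) ^ (1/q) := by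
  rcases hq.eq_or_lt with rfl | hq1
  · simp
  have hq0 : 0 < q := zero_lt_one.trans hq1
  have hpq : (q / (q - 1)).HolderConjugate q := (Real.HolderConjugate.conjExponent hq1).symm
  have hp : 1 / (q / (q - 1)) = 1 - 1/q := by field_simp
  set p := q / (q - 1)
  have hwp : ∀ x, (w x ^ (1/p)) ^ p = w x := fun x => by
    rw [← Real.rpow_mul (hw x), one_div_mul_cancel hpq.pos.ne', Real.rpow_one]
  have hwhq' : ∀ x, (w x ^ (1/q) * h x) ^ q = w x * h x ^ q := fun x => by
    rw [Real.mul_rpow (Real.rpow_nonneg (hw x) _) (hh x), ← Real.rpow_mul (hw x),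
      one_div_mul_cancel hq0.ne', Real.rpow_one]
  have hsplit : ∀ x, w x * h x = w x ^ (1/p) * (w x ^ (1/q) * h x) := fun x => by
    rw [← mul_assoc, ← Real.rpow_add' (hw x) (by rw [hp]; norm_num), hp, sub_add_cancel,
      Real.rpow_one]
  have hwm : AEStronglyMeasurable w μ := hwi.aestronglyMeasurable
  calc ∫ x, w x * h x ∂μ = ∫ x, w x ^ (1/p) * (w x ^ (1/q) * h x) ∂μ := by
        simp_rw [← hsplit]
    _ ≤ (∫ x, (w x ^ (1/p)) ^ p ∂μ) ^ (1/p)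
          * (∫ x, (w x ^ (1/q) * h x) ^ q ∂μ) ^ (1/q) :=
      integral_mul_le_Lp_mul_Lq_of_nonneg hpq
        (.of_forall fun x => Real.rpow_nonneg (hw x) _)
        (.of_forall fun x => mul_nonneg (Real.rpow_nonneg (hw x) _) (hh x))
        (memLp_ofReal_of_integrable_rpow hpq.pos (fun x => Real.rpow_nonneg (hw x) _)
          (hwm.aemeasurable.pow_const _).aestronglyMeasurable (by simpa only [hwp] using hwi))
        (memLp_ofReal_of_integrable_rpow hq0
          (fun x => mul_nonneg (Real.rpow_nonneg (hw x) _) (hh x))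
          ((hwm.aemeasurable.pow_const _).aestronglyMeasurable.mul hhm)
          (by simpa only [hwhq'] using hwhq))
    _ = (∫ x, w x ∂μ) ^ (1 - 1/q) * (∫ x, w x * h x ^ q ∂μ) ^ (1/q) := by
      simp only [hwp, hwhq']
      rw [hp]

end WeightedHolder

-- `simpsonNearCoeff s / 2` and `simpsonFarCoeff s / 2` are the moments of `|5/6 - t|` against
-- `t ^ s` and `(1 - t) ^ s` on `[1/2, 1]`.
noncomputable def simpsonNearCoeff (s : ℝ) : ℝ :=
  (2 * (5:ℝ)^(s+2) + (s-4) * (6:ℝ)^(s+1) - (2*s+7) * (3:ℝ)^(s+1))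
    / (3 * (6:ℝ)^(s+1) * (s+1) * (s+2))

noncomputable def simpsonFarCoeff (s : ℝ) : ℝ :=
  ((2*s+1) * (3:ℝ)^(s+1) + 2) / (3 * (6:ℝ)^(s+1) * (s+1) * (s+2))

section KernelMoments

variable {c s lo hi : ℝ}

lemma integral_sub_mul_rpow (hs : -1 < s) (hlo : 0 ≤ lo) (hhi : 0 ≤ hi) :
    ∫ t in lo..hi, (c - t) * t ^ s
      = c * (hi ^ (s + 1) - lo ^ (s + 1)) / (s + 1) - (hi ^ (s + 2) - lo ^ (s + 2)) / (s + 2) := by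
  have hs1 : -1 < s + 1 := by linarith
  have hexpand : ∀ t ∈ uIcc lo hi, (c - t) * t ^ s = c * t ^ s - t ^ (s + 1) := fun t ht => by
    have ht : 0 ≤ t := le_trans (le_min hlo hhi) ht.1
    rw [Real.rpow_add_one' ht (by linarith)]
    ring
  rw [intervalIntegral.integral_congr hexpand, intervalIntegral.integral_sub
    ((intervalIntegral.intervalIntegrable_rpow' hs).const_mul c)
    (intervalIntegral.intervalIntegrable_rpow' hs1), intervalIntegral.integral_const_mul,
    integral_rpow (Or.inl hs), integral_rpow (Or.inl hs1), show s + 1 + 1 = s + 2 by ring]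
  ring

lemma integral_abs_sub_mul_rpow (hs : -1 < s) (hlo : lo ≤ c) (hhi : c ≤ hi) :
    ∫ t in lo..hi, |c - t| * t ^ s
      = (∫ t in lo..c, (c - t) * t ^ s) - ∫ t in c..hi, (c - t) * t ^ s := by
  have hint : ∀ u v : ℝ, IntervalIntegrable (fun t => |c - t| * t ^ s) volume u v :=
    fun u v => (intervalIntegral.intervalIntegrable_rpow' hs).continuousOn_mul (by fun_prop)
  rw [← intervalIntegral.integral_add_adjacent_intervals (hint lo c) (hint c hi),
    sub_eq_add_neg, ← intervalIntegral.integral_neg]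
  congr 1 <;> refine intervalIntegral.integral_congr fun t ht => ?_
  · rw [uIcc_of_le hlo] at ht
    simp only [abs_of_nonneg (sub_nonneg.2 ht.2)]
  · rw [uIcc_of_le hhi] at ht
    simp only [abs_of_nonpos (sub_nonpos.2 ht.1)]
    ring

end KernelMoments

lemma rpow_add_two_eq_rpow_add_one_mul {x : ℝ} (hx : x ≠ 0) (s : ℝ) :
    x ^ (s + 2) = x ^ (s + 1) * x := by
  rw [show s + 2 = s + 1 + 1 by ring, Real.rpow_add_one hx]

lemma integral_abs_sub_mul_rpow_eq_simpsonNearCoeff {s : ℝ} (hs : -1 < s) :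
    ∫ t in (1/2 : ℝ)..1, |5/6 - t| * t ^ s = simpsonNearCoeff s / 2 := by
  rw [integral_abs_sub_mul_rpow hs (by norm_num) (by norm_num),
    integral_sub_mul_rpow hs (by norm_num) (by norm_num),
    integral_sub_mul_rpow hs (by norm_num) (by norm_num)]
  have h5 : (5/6 : ℝ) ^ (s + 1) = 5 ^ (s + 1) / 6 ^ (s + 1) :=
    Real.div_rpow (by norm_num) (by norm_num) _
  have h3 : (1/2 : ℝ) ^ (s + 1) = 3 ^ (s + 1) / 6 ^ (s + 1) := by
    rw [show (1/2 : ℝ) = 3 / 6 by norm_num, Real.div_rpow (by norm_num) (by norm_num)]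
  have hs1 : s + 1 ≠ 0 := by linarith
  have hs2 : s + 2 ≠ 0 := by linarith
  rw [rpow_add_two_eq_rpow_add_one_mul (by norm_num : (5/6 : ℝ) ≠ 0),
    rpow_add_two_eq_rpow_add_one_mul (by norm_num : (1/2 : ℝ) ≠ 0),
    h5, h3, simpsonNearCoeff, rpow_add_two_eq_rpow_add_one_mul (by norm_num : (5 : ℝ) ≠ 0)]
  simp only [Real.one_rpow]
  field_simp
  ring

lemma integral_abs_sub_mul_one_sub_rpow_eq_simpsonFarCoeff {s : ℝ} (hs : -1 < s) :
    ∫ t in (1/2 : ℝ)..1, |5/6 - t| * (1 - t) ^ s = simpsonFarCoeff s / 2 := by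
  have hrefl := intervalIntegral.integral_comp_sub_left (fun u : ℝ => |1/6 - u| * u ^ s)
    (a := 1/2) (b := 1) 1
  simp only [show ∀ t : ℝ, 1/6 - (1 - t) = -(5/6 - t) by intro t; ring, abs_neg] at hrefl
  rw [hrefl, show (1:ℝ) - 1 = 0 by norm_num, show (1:ℝ) - 1/2 = 1/2 by norm_num,
    integral_abs_sub_mul_rpow hs (by norm_num) (by norm_num),
    integral_sub_mul_rpow hs (by norm_num) (by norm_num),
    integral_sub_mul_rpow hs (by norm_num) (by norm_num)]
  have h1 : (1/6 : ℝ) ^ (s + 1) = 1 / 6 ^ (s + 1) := by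
    rw [Real.div_rpow (by norm_num) (by norm_num), Real.one_rpow]
  have h3 : (1/2 : ℝ) ^ (s + 1) = 3 ^ (s + 1) / 6 ^ (s + 1) := by
    rw [show (1/2 : ℝ) = 3 / 6 by norm_num, Real.div_rpow (by norm_num) (by norm_num)]
  have hs1 : s + 1 ≠ 0 := by linarith
  have hs2 : s + 2 ≠ 0 := by linarith
  rw [rpow_add_two_eq_rpow_add_one_mul (by norm_num : (1/6 : ℝ) ≠ 0),
    rpow_add_two_eq_rpow_add_one_mul (by norm_num : (1/2 : ℝ) ≠ 0),
    h1, h3, Real.zero_rpow hs1, Real.zero_rpow hs2, simpsonFarCoeff]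
  field_simp
  ring

lemma integral_abs_sub_five_sixths : ∫ t in (1/2 : ℝ)..1, |5/6 - t| = 5/72 := by
  have h := integral_abs_sub_mul_rpow_eq_simpsonNearCoeff (s := 0) (by norm_num)
  simp only [Real.rpow_zero, mul_one, simpsonNearCoeff] at h
  rw [h]
  norm_num

lemma intervalIntegrable_one_sub_rpow {s a b : ℝ} (hs : -1 < s) :
    IntervalIntegrable (fun t => (1 - t) ^ s) volume a b := by
  simpa using
    (intervalIntegral.intervalIntegrable_rpow' (a := 1 - a) (b := 1 - b) hs).comp_sub_left 1

lemma intervalIntegrable_simpson_weight {s A B : ℝ} (hs : -1 < s) :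
    IntervalIntegrable (fun t => |5/6 - t| * (t ^ s * A + (1 - t) ^ s * B)) volume (1/2) 1 :=
  (((intervalIntegral.intervalIntegrable_rpow' hs).mul_const A).add
    ((intervalIntegrable_one_sub_rpow hs).mul_const B)).continuousOn_mul (by fun_prop)

lemma integral_simpson_weight {s A B : ℝ} (hs : -1 < s) :
    ∫ t in (1/2 : ℝ)..1, |5/6 - t| * (t ^ s * A + (1 - t) ^ s * B)
      = (simpsonNearCoeff s * A + simpsonFarCoeff s * B) / 2 := by
  simp only [mul_add, ← mul_assoc]
  rw [intervalIntegral.integral_add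
      (((intervalIntegral.intervalIntegrable_rpow' hs).continuousOn_mul (by fun_prop)).mul_const A)
      (((intervalIntegrable_one_sub_rpow hs).continuousOn_mul (by fun_prop)).mul_const B),
    intervalIntegral.integral_mul_const, intervalIntegral.integral_mul_const,
    integral_abs_sub_mul_rpow_eq_simpsonNearCoeff hs,
    integral_abs_sub_mul_one_sub_rpow_eq_simpsonFarCoeff hs]
  ring

theorem abs_integral_simpson_kernel_mul_le {G : ℝ → ℝ} {s q A B : ℝ} (hs : -1 < s)
    (hq : 1 ≤ q)
    (hGm : AEStronglyMeasurable G (volume.restrict (Ioc (1/2) 1)))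
    (hG : ∀ t ∈ Icc (1/2 : ℝ) 1, |G t| ^ q ≤ t ^ s * A + (1 - t) ^ s * B) :
    |∫ t in (1/2 : ℝ)..1, (5/6 - t) * G t|
      ≤ 1/2 * (5/36 : ℝ) ^ (1 - 1/q)
        * (simpsonNearCoeff s * A + simpsonFarCoeff s * B) ^ (1/q) := by
  set T := simpsonNearCoeff s * A + simpsonFarCoeff s * B
  have hIoc : ∀ {F : ℝ → ℝ}, ∫ t in (1/2 : ℝ)..1, F t = ∫ t in Ioc (1/2) 1, F t :=
    intervalIntegral.integral_of_le (by norm_num)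
  have hw : IntegrableOn (fun t : ℝ => |5/6 - t|) (Ioc (1/2) 1) :=
    (continuous_const.sub continuous_id).abs.integrableOn_Ioc
  have hwX : IntegrableOn (fun t => |5/6 - t| * (t ^ s * A + (1 - t) ^ s * B)) (Ioc (1/2) 1) :=
    (intervalIntegrable_iff_integrableOn_Ioc_of_le (by norm_num)).1
      (intervalIntegrable_simpson_weight hs)
  have hbound : ∀ t ∈ Ioc (1/2 : ℝ) 1,
      |5/6 - t| * |G t| ^ q ≤ |5/6 - t| * (t ^ s * A + (1 - t) ^ s * B) := fun t ht =>
    mul_le_mul_of_nonneg_left (hG t (Ioc_subset_Icc_self ht)) (abs_nonneg _)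
  have hwGq : IntegrableOn (fun t => |5/6 - t| * |G t| ^ q) (Ioc (1/2) 1) := by
    refine hwX.mono' ((continuous_const.sub continuous_id).abs.aestronglyMeasurable.mul
      (hGm.norm.aemeasurable.pow_const q).aestronglyMeasurable) ?_
    filter_upwards [ae_restrict_mem measurableSet_Ioc] with t ht
    rw [Real.norm_of_nonneg (by positivity)]
    exact hbound t ht
  have hmoment : ∫ t in Ioc (1/2 : ℝ) 1, |5/6 - t| * |G t| ^ q ≤ T / 2 := by
    rw [← integral_simpson_weight hs, hIoc]
    exact setIntegral_mono_on hwGq hwX measurableSet_Ioc hbound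
  have hT : 0 ≤ T := by
    have : 0 ≤ ∫ t in Ioc (1/2 : ℝ) 1, |5/6 - t| * |G t| ^ q :=
      integral_nonneg fun t => by positivity
    linarith
  calc |∫ t in (1/2 : ℝ)..1, (5/6 - t) * G t|
      ≤ ∫ t in (1/2 : ℝ)..1, |(5/6 - t) * G t| :=
        intervalIntegral.abs_integral_le_integral_abs (by norm_num)
    _ = ∫ t in Ioc (1/2 : ℝ) 1, |5/6 - t| * |G t| := by simp only [hIoc, abs_mul]
    _ ≤ (∫ t in Ioc (1/2 : ℝ) 1, |5/6 - t|) ^ (1 - 1/q)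
          * (∫ t in Ioc (1/2 : ℝ) 1, |5/6 - t| * |G t| ^ q) ^ (1/q) :=
        integral_mul_le_weight_mul_Lp_of_nonneg hq (fun _ => abs_nonneg _) (fun _ => abs_nonneg _)
          hw hwGq hGm.norm
    _ ≤ (5/72) ^ (1 - 1/q) * (T / 2) ^ (1/q) := by
        rw [← hIoc, integral_abs_sub_five_sixths]
        gcongr
    _ = 1/2 * (5/36 : ℝ) ^ (1 - 1/q) * T ^ (1/q) := by
        rw [show (5/72 : ℝ) = 1/2 * (5/36) by norm_num, div_eq_mul_inv T 2, mul_comm T,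
          Real.mul_rpow (by norm_num) (by norm_num), Real.mul_rpow (by norm_num) hT,
          show (2 : ℝ)⁻¹ = 1/2 by norm_num]
        have : (1/2 : ℝ) ^ (1 - 1/q) * (1/2) ^ (1/q) = 1/2 := by
          rw [← Real.rpow_add (by norm_num), sub_add_cancel, Real.rpow_one]
        linear_combination (5/36 : ℝ) ^ (1 - 1/q) * T ^ (1/q) * this

lemma aestronglyMeasurable_comp_lineMap_of_hasDerivAt {f f' : ℝ → ℝ} {a b : ℝ}
    (hf : ∀ x ∈ uIcc a b, HasDerivAt f (f' x) x) :
    AEStronglyMeasurable (fun t => f' (t * a + (1 - t) * b)) (volume.restrict (Icc 0 1)) := by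
  -- `f'` itself need not be measurable, but it agrees with `deriv f` on the segment.
  refine ((measurable_deriv f).comp (f := fun t => t * a + (1 - t) * b)
    (by fun_prop)).aestronglyMeasurable.congr ?_
  filter_upwards [ae_restrict_mem measurableSet_Icc] with t ht
  refine (hf _ ?_).deriv
  rw [← segment_eq_uIcc]
  exact ⟨t, 1 - t, ht.1, by linarith [ht.2], by ring, by simp only [smul_eq_mul]⟩

theorem stmt_4_general (I : Set ℝ) (f f' : ℝ → ℝ) (a b s q : ℝ)
    (hab : a < b) (hI : Set.Icc a b ⊆ interior I)
    (hs : s ∈ Set.Ioc (0:ℝ) 1) (hq : 1 ≤ q)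
    (hder : ∀ x ∈ interior I, HasDerivAt f (f' x) x)
    (hint : IntervalIntegrable f' volume a b)
    (hconv : ∀ x ∈ Set.Icc a b, ∀ y ∈ Set.Icc a b, ∀ t ∈ Set.Icc (0:ℝ) 1,
      |f' (t * x + (1 - t) * y)| ^ q ≤ t ^ s * |f' x| ^ q + (1 - t) ^ s * |f' y| ^ q) :
    |(1/6) * (f a + 4 * f ((a + b)/2) + f b) - (1 / (b - a)) * ∫ x in a..b, f x|
      ≤ ((b - a)/2) * (5/36 : ℝ) ^ (1 - 1/q) *
        ((((2*s+1) * (3:ℝ)^(s+1) + 2) / (3 * (6:ℝ)^(s+1) * (s+1) * (s+2)) * |f' b| ^ q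
            + (2 * (5:ℝ)^(s+2) + (s-4) * (6:ℝ)^(s+1) - (2*s+7) * (3:ℝ)^(s+1))
              / (3 * (6:ℝ)^(s+1) * (s+1) * (s+2)) * |f' a| ^ q) ^ (1/q)
          + ((2 * (5:ℝ)^(s+2) + (s-4) * (6:ℝ)^(s+1) - (2*s+7) * (3:ℝ)^(s+1))
              / (3 * (6:ℝ)^(s+1) * (s+1) * (s+2)) * |f' b| ^ q
            + ((2*s+1) * (3:ℝ)^(s+1) + 2) / (3 * (6:ℝ)^(s+1) * (s+1) * (s+2))
              * |f' a| ^ q) ^ (1/q)) := by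
  have hf : ∀ x ∈ uIcc a b, HasDerivAt f (f' x) x := fun x hx =>
    hder x (hI (uIcc_of_le hab.le ▸ hx))
  have hbound : ∀ x ∈ Icc a b, ∀ y ∈ Icc a b, uIcc x y = uIcc a b →
      |∫ t in (1/2 : ℝ)..1, (5/6 - t) * f' (t * x + (1 - t) * y)|
        ≤ 1/2 * (5/36 : ℝ) ^ (1 - 1/q)
          * (simpsonNearCoeff s * |f' x| ^ q + simpsonFarCoeff s * |f' y| ^ q) ^ (1/q) :=
    fun x hx y hy hxy => abs_integral_simpson_kernel_mul_le (by linarith [hs.1]) hq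
      ((aestronglyMeasurable_comp_lineMap_of_hasDerivAt (hxy ▸ hf)).mono_set
        (Ioc_subset_Icc_self.trans (Icc_subset_Icc (by norm_num) le_rfl)))
      (fun t ht => hconv x hx y hy t ⟨by linarith [ht.1], ht.2⟩)
  have hJab := hbound a (left_mem_Icc.2 hab.le) b (right_mem_Icc.2 hab.le) rfl
  have hJba := hbound b (right_mem_Icc.2 hab.le) a (left_mem_Icc.2 hab.le) (uIcc_comm b a)
  rw [simpson_identity hab.ne hf hint, abs_mul, abs_of_pos (sub_pos.2 hab)]
  refine (mul_le_mul_of_nonneg_left ((abs_sub _ _).trans (add_le_add hJab hJba))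
    (sub_pos.2 hab).le).trans_eq ?_
  rw [add_comm (simpsonNearCoeff s * |f' a| ^ q)]
  unfold simpsonNearCoeff simpsonFarCoeff
  ring

theorem stmt_4 (I : Set ℝ) (f f' : ℝ → ℝ) (a b s q : ℝ)
    (hab : a < b) (hI0 : I ⊆ Set.Ici (0:ℝ)) (hI : Set.Icc a b ⊆ interior I)
    (hs : s ∈ Set.Ioc (0:ℝ) 1) (hq : 1 ≤ q)
    (hder : ∀ x ∈ interior I, HasDerivAt f (f' x) x)
    (hint : IntervalIntegrable f' volume a b)
    (hconv : ∀ x ∈ Set.Icc a b, ∀ y ∈ Set.Icc a b, ∀ t ∈ Set.Icc (0:ℝ) 1,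
      |f' (t * x + (1 - t) * y)| ^ q ≤ t ^ s * |f' x| ^ q + (1 - t) ^ s * |f' y| ^ q) :
    |(1/6) * (f a + 4 * f ((a + b)/2) + f b) - (1 / (b - a)) * ∫ x in a..b, f x|
      ≤ ((b - a)/2) * (5/36 : ℝ) ^ (1 - 1/q) *
        ((((2*s+1) * (3:ℝ)^(s+1) + 2) / (3 * (6:ℝ)^(s+1) * (s+1) * (s+2)) * |f' b| ^ q
            + (2 * (5:ℝ)^(s+2) + (s-4) * (6:ℝ)^(s+1) - (2*s+7) * (3:ℝ)^(s+1))
              / (3 * (6:ℝ)^(s+1) * (s+1) * (s+2)) * |f' a| ^ q) ^ (1/q)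
          + ((2 * (5:ℝ)^(s+2) + (s-4) * (6:ℝ)^(s+1) - (2*s+7) * (3:ℝ)^(s+1))
              / (3 * (6:ℝ)^(s+1) * (s+1) * (s+2)) * |f' b| ^ q
            + ((2*s+1) * (3:ℝ)^(s+1) + 2) / (3 * (6:ℝ)^(s+1) * (s+1) * (s+2))
              * |f' a| ^ q) ^ (1/q)) :=
  stmt_4_general I f f' a b s q hab hI hs hq hder hint hconv
end

section
/- Let f be differentiable on I° with f' integrable on [a,b], a < b, q ≥ 1, and |f'|^q s-convex in the second sense on [a,b] for some s ∈ (0,1]. Then the trapezoid inequality holds: |(f(a)+f(b))/2 - (1/(b-a))∫ₐᵇ f(x)dx| ≤ ((b-a)/8)(2^{1-s}/((s+1)(s+2)))^{1/q} · { (|f'(b)|^q + (2^{s+1}+1)|f'(a)|^q)^{1/q} + (|f'(a)|^q + (2^{s+1}+1)|f'(b)|^q)^{1/q} }. -/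
/-!
Writing `x = t a + (1 - t) b`, integration by parts gives
`(f a + f b) / 2 - (1 / (b - a)) ∫ f = (b - a) / 2 ∫₀¹ (1 - 2t) f'(t a + (1 - t) b) dt`,
and the reflection `t ↦ 1 - t` turns the half `[1/2, 1]` into the same integral over `[0, 1/2]`
with `a` and `b` exchanged. On `[0, 1/2]` the weight `1 - 2t` is nonnegative with mass `1/4`, so
Hölder's inequality bounds each half by `(1/4)^(1 - 1/q) (∫ (1 - 2t) |f'|^q)^(1/q)`, and
s-convexity bounds `|f'|^q` by `t^s |f' a|^q + (1 - t)^s |f' b|^q`, whose weighted integrals are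
explicit.
-/

open MeasureTheory

theorem mul_add_one_sub_mul_mem_uIcc {a b t : ℝ} (ht : t ∈ Set.uIcc 0 1) :
    t * a + (1 - t) * b ∈ Set.uIcc a b := by
  rw [Set.uIcc_of_le zero_le_one] at ht
  rw [← segment_eq_uIcc]
  exact ⟨t, 1 - t, ht.1, by linarith [ht.2], by ring, by simp only [smul_eq_mul]⟩

theorem IntervalIntegrable.comp_convexCombination {E : Type*} [NormedAddCommGroup E]
    {f : ℝ → E} {a b : ℝ} (hf : IntervalIntegrable f volume a b) :
    IntervalIntegrable (fun t ↦ f (t * a + (1 - t) * b)) volume 0 1 := by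
  rcases eq_or_ne a b with rfl | hab
  · simp only [← add_mul, add_sub_cancel, one_mul]
    exact intervalIntegrable_const
  have hline := (hf.comp_add_left b).comp_mul_left (c := a - b)
  rw [div_self (sub_ne_zero.2 hab), sub_self, zero_div] at hline
  convert hline.symm using 3 with t
  ring

theorem trapezoid_sub_average_eq_integral {f f' : ℝ → ℝ} {a b : ℝ} (hab : a ≠ b)
    (hf : ∀ x ∈ Set.uIcc a b, HasDerivAt f (f' x) x) (hf' : IntervalIntegrable f' volume a b) :
    (f a + f b) / 2 - 1 / (b - a) * ∫ x in a..b, f x =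
      (b - a) / 2 * ∫ t in (0 : ℝ)..1, (1 - 2 * t) * f' (t * a + (1 - t) * b) := by
  have hpath : ∀ t ∈ Set.uIcc (0 : ℝ) 1, HasDerivAt (fun t ↦ f (t * a + (1 - t) * b))
      (f' (t * a + (1 - t) * b) * (a - b)) t := fun t ht ↦
    (hf _ (mul_add_one_sub_mul_mem_uIcc ht)).comp t <| (((hasDerivAt_id' t).mul_const a).add
      (((hasDerivAt_id' t).const_sub 1).mul_const b)).congr_deriv (by ring)
  have hparts := intervalIntegral.integral_mul_deriv_eq_deriv_mul
    (fun t _ ↦ ((hasDerivAt_id' t).const_mul 2).const_sub 1) hpath intervalIntegrable_const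
    (hf'.comp_convexCombination.mul_const (a - b))
  have hchange :
      ∫ t in (0 : ℝ)..1, f (t * a + (1 - t) * b) = 1 / (b - a) * ∫ x in a..b, f x := by
    have hline : ∀ t : ℝ, t * a + (1 - t) * b = (a - b) * t + b := fun t ↦ by ring
    simp only [hline, intervalIntegral.integral_comp_mul_add _ (sub_ne_zero.2 hab), mul_zero,
      zero_add, mul_one, sub_add_cancel, intervalIntegral.integral_symm b a, smul_eq_mul]
    rw [← neg_sub b a, inv_neg, one_div]
    ring
  simp only [← mul_assoc, intervalIntegral.integral_mul_const, intervalIntegral.integral_const_mul,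
    mul_one, one_mul, sub_self, zero_mul, add_zero, mul_zero, sub_zero, zero_add, hchange]
    at hparts
  linear_combination (1 / 2 : ℝ) * hparts

theorem intervalIntegral.integral_zero_one_eq_add_comp_one_sub {E : Type*}
    [NormedAddCommGroup E] [NormedSpace ℝ E] {h : ℝ → E} (hh : IntervalIntegrable h volume 0 1) :
    ∫ t in (0 : ℝ)..1, h t = (∫ t in (0 : ℝ)..1 / 2, h t) + ∫ t in (0 : ℝ)..1 / 2, h (1 - t) := by
  have hmid : (1 / 2 : ℝ) ∈ Set.uIcc 0 1 := by norm_num [Set.mem_uIcc]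
  rw [← intervalIntegral.integral_add_adjacent_intervals
      (hh.mono_set (Set.uIcc_subset_uIcc_left hmid))
      (hh.mono_set (Set.uIcc_subset_uIcc_right hmid)),
    intervalIntegral.integral_comp_sub_left]
  norm_num

theorem trapezoid_sub_average_eq_integral_sub {f f' : ℝ → ℝ} {a b : ℝ} (hab : a ≠ b)
    (hf : ∀ x ∈ Set.uIcc a b, HasDerivAt f (f' x) x) (hf' : IntervalIntegrable f' volume a b) :
    (f a + f b) / 2 - 1 / (b - a) * ∫ x in a..b, f x =
      (b - a) / 2 * ((∫ t in (0 : ℝ)..1 / 2, (1 - 2 * t) * f' (t * a + (1 - t) * b)) -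
        ∫ t in (0 : ℝ)..1 / 2, (1 - 2 * t) * f' (t * b + (1 - t) * a)) := by
  have hreflect : ∀ t : ℝ, (1 - 2 * (1 - t)) * f' ((1 - t) * a + (1 - (1 - t)) * b) =
      -((1 - 2 * t) * f' (t * b + (1 - t) * a)) := fun t ↦ by
    rw [show (1 - t) * a + (1 - (1 - t)) * b = t * b + (1 - t) * a by ring]
    ring
  rw [trapezoid_sub_average_eq_integral hab hf hf',
    intervalIntegral.integral_zero_one_eq_add_comp_one_sub
      (hf'.comp_convexCombination.continuousOn_mul (by fun_prop)),
    funext hreflect, intervalIntegral.integral_neg, ← sub_eq_add_neg]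

theorem integral_mul_le_integral_rpow_mul_integral_mul_rpow {α : Type*} [MeasurableSpace α]
    {μ : Measure α} {w g : α → ℝ} {q : ℝ} (hq : 1 ≤ q) (hw0 : 0 ≤ᵐ[μ] w) (hg0 : 0 ≤ᵐ[μ] g)
    (hw : Integrable w μ) (hg : AEStronglyMeasurable g μ)
    (hwg : Integrable (fun x ↦ w x * g x ^ q) μ) :
    ∫ x, w x * g x ∂μ ≤ (∫ x, w x ∂μ) ^ (1 - 1 / q) * (∫ x, w x * g x ^ q ∂μ) ^ (1 / q) := by
  have hq0 : 0 < q := by linarith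
  have hexp : 0 ≤ 1 - 1 / q := by
    rw [sub_nonneg, div_le_one hq0]; exact hq
  have hwg0 : 0 ≤ᵐ[μ] fun x ↦ w x * g x := by
    filter_upwards [hw0, hg0] with x hwx hgx using mul_nonneg hwx hgx
  have hwgq0 : 0 ≤ᵐ[μ] fun x ↦ w x * g x ^ q := by
    filter_upwards [hw0, hg0] with x hwx hgx using mul_nonneg hwx (Real.rpow_nonneg hgx q)
  -- `w g = w ^ (1 - 1/q) * (w g ^ q) ^ (1/q)`, to which Hölder applies with exponents summing to 1
  have hpointwise : ∀ᵐ x ∂μ, ENNReal.ofReal (w x * g x) =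
      ENNReal.ofReal (w x) ^ (1 - 1 / q) * ENNReal.ofReal (w x * g x ^ q) ^ (1 / q) := by
    filter_upwards [hw0, hg0, hwgq0] with x hwx hgx hwgx
    rw [ENNReal.ofReal_rpow_of_nonneg hwx hexp,
      ENNReal.ofReal_rpow_of_nonneg hwgx (by positivity),
      ← ENNReal.ofReal_mul (Real.rpow_nonneg hwx _), Real.mul_rpow hwx (Real.rpow_nonneg hgx q),
      ← Real.rpow_mul hgx, mul_one_div_cancel hq0.ne', Real.rpow_one, ← mul_assoc,
      ← Real.rpow_add' hwx (by norm_num), sub_add_cancel, Real.rpow_one]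
  have hholder := ENNReal.lintegral_mul_norm_pow_le hw.aemeasurable.ennreal_ofReal
    hwg.aemeasurable.ennreal_ofReal hexp (by positivity) (sub_add_cancel 1 (1 / q))
  rw [← lintegral_congr_ae hpointwise] at hholder
  rw [integral_eq_lintegral_of_nonneg_ae hwg0 (hw.aestronglyMeasurable.mul hg),
    integral_eq_lintegral_of_nonneg_ae hw0 hw.aestronglyMeasurable,
    integral_eq_lintegral_of_nonneg_ae hwgq0 hwg.aestronglyMeasurable,
    ENNReal.toReal_rpow, ENNReal.toReal_rpow, ← ENNReal.toReal_mul]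
  exact ENNReal.toReal_mono (ENNReal.mul_ne_top
    (ENNReal.rpow_ne_top_of_nonneg hexp hw.lintegral_lt_top.ne)
    (ENNReal.rpow_ne_top_of_nonneg (by positivity) hwg.lintegral_lt_top.ne)) hholder

theorem integral_mul_rpow {s a b : ℝ} (hs : -1 < s) (ha : 0 ≤ a) (hb : 0 ≤ b) :
    ∫ t in a..b, t * t ^ s = (b ^ (s + 2) - a ^ (s + 2)) / (s + 2) := by
  have hpow : ∀ t ∈ Set.uIcc a b, t * t ^ s = t ^ (s + 1) := fun t ht ↦ by
    rw [Real.rpow_add_one' (le_trans (le_min ha hb) ht.1) (by linarith), mul_comm]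
  rw [intervalIntegral.integral_congr hpow, integral_rpow (Or.inl (by linarith))]
  ring_nf

theorem one_half_rpow_add_two (s : ℝ) : (1 / 2 : ℝ) ^ (s + 2) = (1 / 2) ^ (s + 1) / 2 := by
  rw [show s + 2 = (s + 1) + 1 by ring, Real.rpow_add_one (by norm_num)]
  ring

theorem integral_one_sub_two_mul_mul_rpow {s : ℝ} (hs : -1 < s) :
    ∫ t in (0 : ℝ)..1 / 2, (1 - 2 * t) * t ^ s = (1 / 2) ^ (s + 1) / ((s + 1) * (s + 2)) := by
  have hint : IntervalIntegrable (fun t : ℝ ↦ t ^ s) volume 0 (1 / 2) :=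
    intervalIntegral.intervalIntegrable_rpow' hs
  simp only [sub_mul, one_mul, mul_assoc]
  rw [intervalIntegral.integral_sub hint
      ((hint.continuousOn_mul continuous_id'.continuousOn).const_mul 2),
    intervalIntegral.integral_const_mul, integral_mul_rpow hs le_rfl (by norm_num),
    integral_rpow (Or.inl hs), Real.zero_rpow (by linarith), Real.zero_rpow (by linarith),
    one_half_rpow_add_two]
  have : s + 1 ≠ 0 := by linarith
  have : s + 2 ≠ 0 := by linarith
  field_simp
  ring

theorem integral_one_sub_two_mul_mul_one_sub_rpow {s : ℝ} (hs : -1 < s) :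
    ∫ t in (0 : ℝ)..1 / 2, (1 - 2 * t) * (1 - t) ^ s =
      (s + (1 / 2) ^ (s + 1)) / ((s + 1) * (s + 2)) := by
  have hint : IntervalIntegrable (fun t : ℝ ↦ t ^ s) volume (1 / 2) 1 :=
    intervalIntegral.intervalIntegrable_rpow' hs
  have hreflect := intervalIntegral.integral_comp_sub_left
    (fun u : ℝ ↦ 2 * (u * u ^ s) - u ^ s) (a := 0) (b := 1 / 2) 1
  norm_num only at hreflect
  rw [intervalIntegral.integral_sub
      ((hint.continuousOn_mul continuous_id'.continuousOn).const_mul 2) hint,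
    intervalIntegral.integral_const_mul, integral_mul_rpow hs (by norm_num) (by norm_num),
    integral_rpow (Or.inl hs), Real.one_rpow, Real.one_rpow, one_half_rpow_add_two] at hreflect
  calc ∫ t in (0 : ℝ)..1 / 2, (1 - 2 * t) * (1 - t) ^ s
      = ∫ t in (0 : ℝ)..1 / 2, 2 * ((1 - t) * (1 - t) ^ s) - (1 - t) ^ s := by
        congr 1 with t
        ring
    _ = (s + (1 / 2) ^ (s + 1)) / ((s + 1) * (s + 2)) := by
        rw [hreflect]
        have : s + 1 ≠ 0 := by linarith
        have : s + 2 ≠ 0 := by linarith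
        field_simp
        ring

theorem intervalIntegrable_one_sub_two_mul_mul_rpow {s : ℝ} (hs : -1 < s) :
    IntervalIntegrable (fun t : ℝ ↦ (1 - 2 * t) * t ^ s) volume 0 (1 / 2) :=
  (intervalIntegral.intervalIntegrable_rpow' hs).continuousOn_mul (by fun_prop)

theorem intervalIntegrable_one_sub_two_mul_mul_one_sub_rpow (s : ℝ) :
    IntervalIntegrable (fun t : ℝ ↦ (1 - 2 * t) * (1 - t) ^ s) volume 0 (1 / 2) := by
  refine ContinuousOn.intervalIntegrable (by fun_prop) |>.mul_continuousOn ?_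
  refine (continuousOn_const.sub continuousOn_id).rpow_const fun t ht ↦ Or.inl ?_
  rw [Set.uIcc_of_le (by norm_num)] at ht
  simp only [Pi.sub_apply, id]
  linarith [ht.2]

theorem intervalIntegrable_one_sub_two_mul_mul_rpow_add_one_sub_rpow {s : ℝ} (hs : -1 < s)
    (A B : ℝ) : IntervalIntegrable (fun t : ℝ ↦ (1 - 2 * t) * (t ^ s * A + (1 - t) ^ s * B))
      volume 0 (1 / 2) := by
  convert ((intervalIntegrable_one_sub_two_mul_mul_rpow hs).mul_const A).add
    ((intervalIntegrable_one_sub_two_mul_mul_one_sub_rpow s).mul_const B) using 1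
  ext t
  ring

theorem integral_one_sub_two_mul_mul_rpow_add_one_sub_rpow_le {s A B : ℝ} (hs : -1 < s)
    (hs1 : s ≤ 1) (hB : 0 ≤ B) :
    ∫ t in (0 : ℝ)..1 / 2, (1 - 2 * t) * (t ^ s * A + (1 - t) ^ s * B) ≤
      1 / 4 * (2 ^ (1 - s) / ((s + 1) * (s + 2)) * (A + (2 ^ (s + 1) + 1) * B)) := by
  have hsplit : ∀ t : ℝ, (1 - 2 * t) * (t ^ s * A + (1 - t) ^ s * B) =
      A * ((1 - 2 * t) * t ^ s) + B * ((1 - 2 * t) * (1 - t) ^ s) := fun t ↦ by ring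
  simp only [hsplit]
  rw [intervalIntegral.integral_add
      ((intervalIntegrable_one_sub_two_mul_mul_rpow hs).const_mul A)
      ((intervalIntegrable_one_sub_two_mul_mul_one_sub_rpow s).const_mul B),
    intervalIntegral.integral_const_mul, intervalIntegral.integral_const_mul,
    integral_one_sub_two_mul_mul_rpow hs, integral_one_sub_two_mul_mul_one_sub_rpow hs,
    Real.rpow_sub two_pos, Real.rpow_add_one two_ne_zero,
    Real.div_rpow zero_le_one zero_le_two, Real.one_rpow, Real.rpow_one,
    Real.rpow_add_one two_ne_zero]
  have h2s : 0 < (2 : ℝ) ^ s := by positivity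
  have hD : 0 < (s + 1) * (s + 2) := by nlinarith
  have hgap : 1 / 4 * (2 / 2 ^ s / ((s + 1) * (s + 2)) * (A + (2 ^ s * 2 + 1) * B)) -
      (A * (1 / (2 ^ s * 2) / ((s + 1) * (s + 2))) +
        B * ((s + 1 / (2 ^ s * 2)) / ((s + 1) * (s + 2)))) =
      (1 - s) * B / ((s + 1) * (s + 2)) := by
    field_simp
    ring
  rw [← sub_nonneg, hgap]
  exact div_nonneg (mul_nonneg (by linarith) hB) hD.le

theorem abs_integral_one_sub_two_mul_mul_le {g : ℝ → ℝ} {s q A B : ℝ} (hs : -1 < s)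
    (hs1 : s ≤ 1) (hq : 1 ≤ q) (hB : 0 ≤ B) (hg : IntervalIntegrable g volume 0 (1 / 2))
    (hbound : ∀ t ∈ Set.Icc (0 : ℝ) (1 / 2), |g t| ^ q ≤ t ^ s * A + (1 - t) ^ s * B) :
    |∫ t in (0 : ℝ)..1 / 2, (1 - 2 * t) * g t| ≤
      1 / 4 * (2 ^ (1 - s) / ((s + 1) * (s + 2)) * (A + (2 ^ (s + 1) + 1) * B)) ^ (1 / q) := by
  set X := 2 ^ (1 - s) / ((s + 1) * (s + 2)) * (A + (2 ^ (s + 1) + 1) * B)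
  set r : ℝ → ℝ := fun t ↦ t ^ s * A + (1 - t) ^ s * B
  have hhalf : (0 : ℝ) ≤ 1 / 2 := by norm_num
  have hw : ∀ t ∈ Set.Ioc (0 : ℝ) (1 / 2), 0 ≤ 1 - 2 * t := fun t ht ↦ by linarith [ht.2]
  have hbound' : ∀ t ∈ Set.Ioc (0 : ℝ) (1 / 2), (1 - 2 * t) * |g t| ^ q ≤ (1 - 2 * t) * r t :=
    fun t ht ↦ mul_le_mul_of_nonneg_left (hbound t (Set.Ioc_subset_Icc_self ht)) (hw t ht)
  have hr : IntegrableOn (fun t ↦ (1 - 2 * t) * r t) (Set.Ioc 0 (1 / 2)) :=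
    (intervalIntegrable_one_sub_two_mul_mul_rpow_add_one_sub_rpow hs A B).1
  have hgq : IntegrableOn (fun t ↦ (1 - 2 * t) * |g t| ^ q) (Set.Ioc 0 (1 / 2)) := by
    have hgm := hg.1.aestronglyMeasurable
    refine hr.mono' (by fun_prop (disch := linarith))
      ((ae_restrict_iff' measurableSet_Ioc).2 (ae_of_all _ fun t ht ↦ ?_))
    rw [Real.norm_of_nonneg (mul_nonneg (hw t ht) (by positivity))]
    exact hbound' t ht
  have hweight : ∫ t in Set.Ioc (0 : ℝ) (1 / 2), (1 - 2 * t) = 1 / 4 := by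
    rw [← intervalIntegral.integral_of_le hhalf, intervalIntegral.integral_sub
      intervalIntegrable_const (intervalIntegral.intervalIntegrable_id.const_mul 2),
      intervalIntegral.integral_const_mul, integral_id, intervalIntegral.integral_const]
    norm_num
  have hmoment : ∫ t in Set.Ioc (0 : ℝ) (1 / 2), (1 - 2 * t) * |g t| ^ q ≤ 1 / 4 * X := by
    refine (setIntegral_mono_on hgq hr measurableSet_Ioc hbound').trans ?_
    rw [← intervalIntegral.integral_of_le hhalf]
    exact integral_one_sub_two_mul_mul_rpow_add_one_sub_rpow_le hs hs1 hB
  have hmoment_nonneg : 0 ≤ ∫ t in Set.Ioc (0 : ℝ) (1 / 2), (1 - 2 * t) * |g t| ^ q :=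
    setIntegral_nonneg measurableSet_Ioc fun t ht ↦ mul_nonneg (hw t ht) (by positivity)
  have hX : 0 ≤ X := by linarith
  calc |∫ t in (0 : ℝ)..1 / 2, (1 - 2 * t) * g t|
      ≤ ∫ t in Set.Ioc (0 : ℝ) (1 / 2), (1 - 2 * t) * |g t| := by
        refine (intervalIntegral.abs_integral_le_integral_abs hhalf).trans_eq ?_
        rw [intervalIntegral.integral_of_le hhalf]
        refine setIntegral_congr_fun measurableSet_Ioc fun t ht ↦ ?_
        rw [abs_mul, abs_of_nonneg (hw t ht)]
    _ ≤ (1 / 4) ^ (1 - 1 / q) *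
          (∫ t in Set.Ioc (0 : ℝ) (1 / 2), (1 - 2 * t) * |g t| ^ q) ^ (1 / q) := by
        rw [← hweight]
        exact integral_mul_le_integral_rpow_mul_integral_mul_rpow hq
          ((ae_restrict_iff' measurableSet_Ioc).2 (ae_of_all _ hw))
          (ae_of_all _ fun t ↦ abs_nonneg (g t)) (Continuous.integrableOn_Ioc (by fun_prop))
          hg.1.abs.aestronglyMeasurable hgq
    _ ≤ (1 / 4) ^ (1 - 1 / q) * (1 / 4 * X) ^ (1 / q) := by
        gcongr
    _ = 1 / 4 * X ^ (1 / q) := by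
        rw [Real.mul_rpow (by norm_num) hX, ← mul_assoc,
          ← Real.rpow_add' (by norm_num) (by norm_num), sub_add_cancel, Real.rpow_one]

theorem abs_integral_one_sub_two_mul_comp_le {f' : ℝ → ℝ} {x y s q : ℝ} (hs : -1 < s)
    (hs1 : s ≤ 1) (hq : 1 ≤ q) (hf' : IntervalIntegrable f' volume x y)
    (hconv : ∀ t ∈ Set.Icc (0 : ℝ) 1,
      |f' (t * x + (1 - t) * y)| ^ q ≤ t ^ s * |f' x| ^ q + (1 - t) ^ s * |f' y| ^ q) :
    |∫ t in (0 : ℝ)..1 / 2, (1 - 2 * t) * f' (t * x + (1 - t) * y)| ≤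
      1 / 4 * (2 ^ (1 - s) / ((s + 1) * (s + 2))) ^ (1 / q) *
        (|f' x| ^ q + (2 ^ (s + 1) + 1) * |f' y| ^ q) ^ (1 / q) := by
  have hhalf : Set.uIcc (0 : ℝ) (1 / 2) ⊆ Set.uIcc 0 1 :=
    Set.uIcc_subset_uIcc_left (by norm_num [Set.mem_uIcc])
  have hD : 0 < (s + 1) * (s + 2) := by nlinarith
  rw [mul_assoc, ← Real.mul_rpow (by positivity) (by positivity)]
  exact abs_integral_one_sub_two_mul_mul_le hs hs1 hq (by positivity)
    (hf'.comp_convexCombination.mono_set hhalf) fun t ht ↦ hconv t ⟨ht.1, by linarith [ht.2]⟩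

theorem stmt_6_general (I : Set ℝ) (f f' : ℝ → ℝ) (a b s q : ℝ)
    (hab : a < b) (hI : Set.Icc a b ⊆ interior I)
    (hs : s ∈ Set.Ioc (0:ℝ) 1) (hq : 1 ≤ q)
    (hder : ∀ x ∈ interior I, HasDerivAt f (f' x) x)
    (hint : IntervalIntegrable f' volume a b)
    (hconv : ∀ x ∈ Set.Icc a b, ∀ y ∈ Set.Icc a b, ∀ t ∈ Set.Icc (0:ℝ) 1,
      |f' (t * x + (1 - t) * y)| ^ q ≤ t ^ s * |f' x| ^ q + (1 - t) ^ s * |f' y| ^ q) :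
    |(f a + f b)/2 - (1 / (b - a)) * ∫ x in a..b, f x|
      ≤ ((b - a)/8) * ((2:ℝ)^(1-s) / ((s+1) * (s+2))) ^ (1/q) *
        ((|f' b| ^ q + ((2:ℝ)^(s+1) + 1) * |f' a| ^ q) ^ (1/q)
          + (|f' a| ^ q + ((2:ℝ)^(s+1) + 1) * |f' b| ^ q) ^ (1/q)) := by
  obtain ⟨hs0, hs1⟩ := hs
  have hf : ∀ x ∈ Set.uIcc a b, HasDerivAt f (f' x) x := fun x hx ↦
    hder x (hI (by rwa [Set.uIcc_of_le hab.le] at hx))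
  have ha : a ∈ Set.Icc a b := Set.left_mem_Icc.2 hab.le
  have hb : b ∈ Set.Icc a b := Set.right_mem_Icc.2 hab.le
  have hJ₁ := abs_integral_one_sub_two_mul_comp_le (by linarith) hs1 hq hint (hconv a ha b hb)
  have hJ₂ :=
    abs_integral_one_sub_two_mul_comp_le (by linarith) hs1 hq hint.symm (hconv b hb a ha)
  rw [trapezoid_sub_average_eq_integral_sub hab.ne hf hint, abs_mul, abs_of_pos (by linarith)]
  refine (mul_le_mul_of_nonneg_left ((abs_sub _ _).trans (add_le_add hJ₁ hJ₂))
    (by linarith)).trans_eq ?_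
  ring

theorem stmt_6 (I : Set ℝ) (f f' : ℝ → ℝ) (a b s q : ℝ)
    (hab : a < b) (hI0 : I ⊆ Set.Ici (0:ℝ)) (hI : Set.Icc a b ⊆ interior I)
    (hs : s ∈ Set.Ioc (0:ℝ) 1) (hq : 1 ≤ q)
    (hder : ∀ x ∈ interior I, HasDerivAt f (f' x) x)
    (hint : IntervalIntegrable f' volume a b)
    (hconv : ∀ x ∈ Set.Icc a b, ∀ y ∈ Set.Icc a b, ∀ t ∈ Set.Icc (0:ℝ) 1,
      |f' (t * x + (1 - t) * y)| ^ q ≤ t ^ s * |f' x| ^ q + (1 - t) ^ s * |f' y| ^ q) :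
    |(f a + f b)/2 - (1 / (b - a)) * ∫ x in a..b, f x|
      ≤ ((b - a)/8) * ((2:ℝ)^(1-s) / ((s+1) * (s+2))) ^ (1/q) *
        ((|f' b| ^ q + ((2:ℝ)^(s+1) + 1) * |f' a| ^ q) ^ (1/q)
          + (|f' a| ^ q + ((2:ℝ)^(s+1) + 1) * |f' b| ^ q) ^ (1/q)) :=
  stmt_6_general I f f' a b s q hab hI hs hq hder hint hconv
end

section
/- Let f be differentiable on I° with f' integrable on [a,b], a < b, q > 1 with 1/p+1/q = 1, and |f'|^q s-convex in the second sense on [a,b] for s ∈ (0,1]. Then |(f(a)+f(b))/2 - (1/(b-a))∫ₐᵇ f(x)dx| ≤ ((b-a)/4)(1/(p+1))^{1/p} · { ((|f'((a+b)/2)|^q + |f'(a)|^q)/(s+1))^{1/q} + ((|f'((a+b)/2)|^q + |f'(b)|^q)/(s+1))^{1/q} }. -/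
/-!
Integrating by parts, the trapezoid error `(f a + f b) / 2 - ⨍ f` equals
`(1 / (b - a)) ∫ (x - (a + b) / 2) f' x dx`. On each half of `[a, b]` Hölder's inequality
separates the weight `|x - (a + b) / 2|`, whose `p`-th power integrates explicitly, from `|f'|`.
Then `∫ |f'| ^ q` over a half `[c, d]` is bounded by the Hermite–Hadamard-type estimate
`∫_c^d φ ≤ (d - c) (φ c + φ d) / (s + 1)`, obtained by integrating the `s`-convexity
inequality.
-/

open MeasureTheory Set

/-- `s`-convexity in the second sense (Breckner): the weights `t ^ s`, `(1 - t) ^ s` need not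
sum to `1`. -/
def SConvexOn (s : ℝ) (S : Set ℝ) (φ : ℝ → ℝ) : Prop :=
  ∀ x ∈ S, ∀ y ∈ S, ∀ t ∈ Icc (0 : ℝ) 1,
    φ (t * x + (1 - t) * y) ≤ t ^ s * φ x + (1 - t) ^ s * φ y

theorem integral_sub_div_rpow {c d s : ℝ} (hs : -1 < s) (hcd : c ≠ d) :
    ∫ x in c..d, ((x - c) / (d - c)) ^ s = (d - c) / (s + 1) := by
  have hdc : d - c ≠ 0 := sub_ne_zero.2 hcd.symm
  simp_rw [fun x => sub_div x c (d - c)]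
  rw [intervalIntegral.integral_comp_div_sub (fun x => x ^ s) hdc, sub_self, ← sub_div,
    div_self hdc, integral_rpow (.inl hs), Real.one_rpow, Real.zero_rpow (by linarith), smul_eq_mul]
  ring

theorem integral_sub_div_rpow' {c d s : ℝ} (hs : -1 < s) (hcd : c ≠ d) :
    ∫ x in c..d, ((d - x) / (d - c)) ^ s = (d - c) / (s + 1) := by
  have hdc : d - c ≠ 0 := sub_ne_zero.2 hcd.symm
  simp_rw [fun x => sub_div d x (d - c)]
  rw [intervalIntegral.integral_comp_sub_div (fun x => x ^ s) hdc, sub_self, ← sub_div,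
    div_self hdc, integral_rpow (.inl hs), Real.one_rpow, Real.zero_rpow (by linarith), smul_eq_mul]
  ring

theorem integral_abs_sub_rpow {c d e p : ℝ} (hp : -1 < p) (hcd : c ≤ d) (he : e = c ∨ e = d) :
    ∫ x in c..d, |x - e| ^ p = (d - c) ^ (p + 1) / (p + 1) := by
  have hp1 : p + 1 ≠ 0 := by linarith
  rcases he with rfl | rfl
  · rw [intervalIntegral.integral_congr (g := fun x => (x - e) ^ p) fun x hx => by
        rw [abs_of_nonneg (sub_nonneg.2 (uIcc_of_le hcd ▸ hx).1)],
      intervalIntegral.integral_comp_sub_right (fun x => x ^ p), sub_self, integral_rpow (.inl hp),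
      Real.zero_rpow hp1, sub_zero]
  · rw [intervalIntegral.integral_congr (g := fun x => (e - x) ^ p) fun x hx => by
        rw [abs_sub_comm, abs_of_nonneg (sub_nonneg.2 (uIcc_of_le hcd ▸ hx).2)],
      intervalIntegral.integral_comp_sub_left (fun x => x ^ p), sub_self, integral_rpow (.inl hp),
      Real.zero_rpow hp1, sub_zero]

namespace SConvexOn

variable {s c d : ℝ} {S T : Set ℝ} {φ : ℝ → ℝ}

theorem subset (h : SConvexOn s S φ) (hTS : T ⊆ S) : SConvexOn s T φ :=
  fun x hx y hy t ht => h x (hTS hx) y (hTS hy) t ht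

theorem le_of_mem_Icc (h : SConvexOn s (Icc c d) φ) (hcd : c < d) {x : ℝ} (hx : x ∈ Icc c d) :
    φ x ≤ ((d - x) / (d - c)) ^ s * φ c + ((x - c) / (d - c)) ^ s * φ d := by
  have hdc : 0 < d - c := sub_pos.2 hcd
  have ht : (d - x) / (d - c) ∈ Icc (0 : ℝ) 1 :=
    ⟨div_nonneg (by linarith [hx.2]) hdc.le, (div_le_one hdc).2 (by linarith [hx.1])⟩
  have h1t : 1 - (d - x) / (d - c) = (x - c) / (d - c) := by field_simp; ring
  have hxt : (d - x) / (d - c) * c + (x - c) / (d - c) * d = x := by field_simp; ring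
  simpa only [h1t, hxt] using h c (left_mem_Icc.2 hcd.le) d (right_mem_Icc.2 hcd.le) _ ht

theorem le_add_of_mem_Icc (h : SConvexOn s (Icc c d) φ) (hs : 0 ≤ s) (hcd : c < d)
    (hc : 0 ≤ φ c) (hd : 0 ≤ φ d) {x : ℝ} (hx : x ∈ Icc c d) : φ x ≤ φ c + φ d := by
  have hdc : 0 < d - c := sub_pos.2 hcd
  have hw₁ : ((d - x) / (d - c)) ^ s ≤ 1 := Real.rpow_le_one
    (div_nonneg (by linarith [hx.2]) hdc.le) ((div_le_one hdc).2 (by linarith [hx.1])) hs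
  have hw₂ : ((x - c) / (d - c)) ^ s ≤ 1 := Real.rpow_le_one
    (div_nonneg (by linarith [hx.1]) hdc.le) ((div_le_one hdc).2 (by linarith [hx.2])) hs
  calc φ x ≤ ((d - x) / (d - c)) ^ s * φ c + ((x - c) / (d - c)) ^ s * φ d :=
        h.le_of_mem_Icc hcd hx
    _ ≤ 1 * φ c + 1 * φ d := by gcongr
    _ = φ c + φ d := by ring

theorem integral_le (h : SConvexOn s (Icc c d) φ) (hs : 0 ≤ s) (hcd : c < d)
    (hφ : ∀ x ∈ Icc c d, 0 ≤ φ x) :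
    ∫ x in c..d, φ x ≤ (d - c) * (φ c + φ d) / (s + 1) := by
  have hrpow := Real.continuous_rpow_const hs
  have hw₁ : Continuous fun x => ((d - x) / (d - c)) ^ s * φ c := by fun_prop
  have hw₂ : Continuous fun x => ((x - c) / (d - c)) ^ s * φ d := by fun_prop
  calc ∫ x in c..d, φ x
      ≤ ∫ x in c..d, (((d - x) / (d - c)) ^ s * φ c + ((x - c) / (d - c)) ^ s * φ d) := by
        rw [intervalIntegral.integral_of_le hcd.le, intervalIntegral.integral_of_le hcd.le]
        refine integral_mono_of_nonneg ?_
          ((hw₁.add hw₂).integrableOn_Icc.mono_set Ioc_subset_Icc_self) ?_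
        · exact ae_restrict_of_forall_mem measurableSet_Ioc fun x hx =>
            hφ x (Ioc_subset_Icc_self hx)
        · exact ae_restrict_of_forall_mem measurableSet_Ioc fun x hx =>
            h.le_of_mem_Icc hcd (Ioc_subset_Icc_self hx)
    _ = (d - c) * (φ c + φ d) / (s + 1) := by
        rw [intervalIntegral.integral_add (hw₁.intervalIntegrable _ _)
            (hw₂.intervalIntegrable _ _),
          intervalIntegral.integral_mul_const, intervalIntegral.integral_mul_const,
          integral_sub_div_rpow' (by linarith) hcd.ne, integral_sub_div_rpow (by linarith) hcd.ne]
        ring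

end SConvexOn

theorem Real.HolderConjugate.rpow_div_mul_rpow {p q D X : ℝ} (hpq : p.HolderConjugate q)
    (hD : 0 ≤ D) (hX : 0 ≤ X) :
    (D ^ (p + 1) / (p + 1)) ^ (1 / p) * (D * X) ^ (1 / q)
      = D ^ 2 * (1 / (p + 1)) ^ (1 / p) * X ^ (1 / q) := by
  have hexp : (p + 1) * (1 / p) + 1 / q = 2 := by
    rw [add_mul, mul_one_div_cancel hpq.ne_zero, one_mul, add_assoc, hpq.one_div_add_one_div]
    norm_num
  rw [div_eq_mul_one_div _ (p + 1), Real.mul_rpow (Real.rpow_nonneg hD _)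
      (one_div_nonneg.2 (by linarith [hpq.pos])), Real.mul_rpow hD hX, ← Real.rpow_mul hD]
  calc _ = D ^ ((p + 1) * (1 / p) + 1 / q) * (1 / (p + 1)) ^ (1 / p) * X ^ (1 / q) := by
        rw [Real.rpow_add' hD (by rw [hexp]; norm_num)]; ring
    _ = _ := by rw [hexp, Real.rpow_two]

theorem integral_abs_sub_mul_abs_le_of_sConvexOn {g : ℝ → ℝ} {c d e s p q : ℝ}
    (hs : 0 ≤ s) (hpq : p.HolderConjugate q) (hcd : c < d) (he : e = c ∨ e = d)
    (hg : AEStronglyMeasurable g (volume.restrict (Ioc c d)))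
    (hconv : SConvexOn s (Icc c d) fun x => |g x| ^ q) :
    ∫ x in c..d, |x - e| * |g x|
      ≤ (d - c) ^ 2 * (1 / (p + 1)) ^ (1 / p) *
        ((|g c| ^ q + |g d| ^ q) / (s + 1)) ^ (1 / q) := by
  set M := |g c| ^ q + |g d| ^ q
  have hdc : 0 < d - c := sub_pos.2 hcd
  have hM : 0 ≤ M := by positivity
  have hp1 : 0 < p + 1 := by linarith [hpq.pos]
  have hs1 : 0 < s + 1 := by linarith
  have hbound : ∀ x ∈ Ioc c d, ‖|g x|‖ ≤ M ^ (1 / q) := fun x hx => by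
    rw [Real.norm_eq_abs, abs_abs, ← Real.rpow_rpow_inv (abs_nonneg (g x)) hpq.symm.ne_zero,
      ← one_div]
    exact Real.rpow_le_rpow (by positivity) (hconv.le_add_of_mem_Icc hs hcd (by positivity)
      (by positivity) (Ioc_subset_Icc_self hx)) hpq.symm.one_div_nonneg
  have hweight : ∀ x ∈ Ioc c d, ‖|x - e|‖ ≤ d - c := fun x hx => by
    rw [Real.norm_eq_abs, abs_abs, abs_le]
    rcases he with rfl | rfl <;> constructor <;> linarith [hx.1, hx.2]
  have holder : ∫ x in c..d, |x - e| * |g x|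
      ≤ (∫ x in c..d, |x - e| ^ p) ^ (1 / p) * (∫ x in c..d, |g x| ^ q) ^ (1 / q) := by
    simp only [intervalIntegral.integral_of_le hcd.le]
    exact integral_mul_le_Lp_mul_Lq_of_nonneg hpq (ae_of_all _ fun _ => abs_nonneg _)
      (ae_of_all _ fun _ => abs_nonneg _)
      (.of_bound (by fun_prop) _ (ae_restrict_of_forall_mem measurableSet_Ioc hweight))
      (.of_bound hg.norm _ (ae_restrict_of_forall_mem measurableSet_Ioc hbound))
  refine (holder.trans ?_).trans_eq (hpq.rpow_div_mul_rpow hdc.le (div_nonneg hM hs1.le))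
  rw [integral_abs_sub_rpow (by linarith [hpq.pos]) hcd.le he]
  refine mul_le_mul_of_nonneg_left (Real.rpow_le_rpow ?_
    ((hconv.integral_le hs hcd fun x _ => by positivity).trans_eq (mul_div_assoc _ _ _))
    hpq.symm.one_div_nonneg)
    (Real.rpow_nonneg (div_nonneg (Real.rpow_nonneg hdc.le _) hp1.le) _)
  exact intervalIntegral.integral_nonneg hcd.le fun x _ => by positivity

theorem trapezoid_sub_average_eq_integral_mul_deriv {f f' : ℝ → ℝ} {a b : ℝ} (hab : a ≠ b)
    (hder : ∀ x ∈ uIcc a b, HasDerivAt f (f' x) x) (hint : IntervalIntegrable f' volume a b) :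
    (f a + f b) / 2 - 1 / (b - a) * ∫ x in a..b, f x
      = 1 / (b - a) * ∫ x in a..b, (x - (a + b) / 2) * f' x := by
  have hparts := intervalIntegral.integral_mul_deriv_eq_deriv_mul
    (fun x _ => (hasDerivAt_id x).sub_const ((a + b) / 2)) hder intervalIntegrable_const hint
  simp only [id, one_mul] at hparts
  rw [hparts]
  have hba : b - a ≠ 0 := sub_ne_zero.2 hab.symm
  field_simp
  ring

theorem integral_abs_sub_midpoint_mul_abs_le_of_sConvexOn {g : ℝ → ℝ} {a b s p q : ℝ}
    (hs : 0 ≤ s) (hpq : p.HolderConjugate q) (hab : a < b) (hg : IntervalIntegrable g volume a b)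
    (hconv : SConvexOn s (Icc a b) fun x => |g x| ^ q) :
    ∫ x in a..b, |x - (a + b) / 2| * |g x|
      ≤ (b - a) ^ 2 / 4 * (1 / (p + 1)) ^ (1 / p) *
        (((|g ((a + b) / 2)| ^ q + |g a| ^ q) / (s + 1)) ^ (1 / q)
          + ((|g ((a + b) / 2)| ^ q + |g b| ^ q) / (s + 1)) ^ (1 / q)) := by
  have hhalf : ∀ c d e, a ≤ c → c < d → d ≤ b → e = c ∨ e = d →
      ∫ x in c..d, |x - e| * |g x|
        ≤ (d - c) ^ 2 * (1 / (p + 1)) ^ (1 / p) * ((|g c| ^ q + |g d| ^ q) / (s + 1)) ^ (1 / q) :=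
    fun c d e hac hcd hdb he => integral_abs_sub_mul_abs_le_of_sConvexOn hs hpq hcd he
      (hg.1.aestronglyMeasurable.mono_set (Ioc_subset_Ioc hac hdb))
      (hconv.subset (Icc_subset_Icc hac hdb))
  set m := (a + b) / 2 with hm
  have ham : m - a = (b - a) / 2 := by rw [hm]; ring
  have hmb : b - m = (b - a) / 2 := by rw [hm]; ring
  have hm_mem : m ∈ uIcc a b := Icc_subset_uIcc ⟨by linarith, by linarith⟩
  have hweighted : IntervalIntegrable (fun x => |x - m| * |g x|) volume a b :=
    hg.abs.continuousOn_mul (by fun_prop)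
  rw [← intervalIntegral.integral_add_adjacent_intervals
    (hweighted.mono_set (uIcc_subset_uIcc_left hm_mem))
    (hweighted.mono_set (uIcc_subset_uIcc_right hm_mem))]
  calc (∫ x in a..m, |x - m| * |g x|) + ∫ x in m..b, |x - m| * |g x|
      ≤ (m - a) ^ 2 * (1 / (p + 1)) ^ (1 / p) * ((|g a| ^ q + |g m| ^ q) / (s + 1)) ^ (1 / q)
        + (b - m) ^ 2 * (1 / (p + 1)) ^ (1 / p) * ((|g m| ^ q + |g b| ^ q) / (s + 1)) ^ (1 / q) :=
        add_le_add (hhalf a m m le_rfl (by linarith) (by linarith) (.inr rfl))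
          (hhalf m b m (by linarith) (by linarith) le_rfl (.inl rfl))
    _ = _ := by
        rw [ham, hmb, add_comm (|g a| ^ q)]
        ring

theorem stmt_9_general (I : Set ℝ) (f f' : ℝ → ℝ) (a b s p q : ℝ)
    (hab : a < b) (hI : Set.Icc a b ⊆ interior I)
    (hs : s ∈ Set.Ioc (0:ℝ) 1) (hq : 1 < q) (hpq : 1/p + 1/q = 1)
    (hder : ∀ x ∈ interior I, HasDerivAt f (f' x) x)
    (hint : IntervalIntegrable f' volume a b)
    (hconv : ∀ x ∈ Set.Icc a b, ∀ y ∈ Set.Icc a b, ∀ t ∈ Set.Icc (0:ℝ) 1,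
      |f' (t * x + (1 - t) * y)| ^ q ≤ t ^ s * |f' x| ^ q + (1 - t) ^ s * |f' y| ^ q) :
    |(f a + f b)/2 - (1 / (b - a)) * ∫ x in a..b, f x|
      ≤ ((b - a)/4) * (1/(p+1)) ^ (1/p) *
        (((|f' ((a + b)/2)| ^ q + |f' a| ^ q) / (s+1)) ^ (1/q)
          + ((|f' ((a + b)/2)| ^ q + |f' b| ^ q) / (s+1)) ^ (1/q)) := by
  have hpq' : p.HolderConjugate q :=
    (Real.holderConjugate_iff.2 ⟨hq, by simpa only [one_div, add_comm] using hpq⟩).symm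
  rw [trapezoid_sub_average_eq_integral_mul_deriv hab.ne
      (fun x hx => hder x (hI (uIcc_of_le hab.le ▸ hx))) hint,
    abs_mul, abs_of_pos (one_div_pos.2 (sub_pos.2 hab))]
  calc 1 / (b - a) * |∫ x in a..b, (x - (a + b) / 2) * f' x|
      ≤ 1 / (b - a) * ∫ x in a..b, |x - (a + b) / 2| * |f' x| := by
        gcongr
        simp_rw [← abs_mul]
        exact intervalIntegral.abs_integral_le_integral_abs hab.le
    _ ≤ 1 / (b - a) * ((b - a) ^ 2 / 4 * (1 / (p + 1)) ^ (1 / p) *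
          (((|f' ((a + b) / 2)| ^ q + |f' a| ^ q) / (s + 1)) ^ (1 / q)
            + ((|f' ((a + b) / 2)| ^ q + |f' b| ^ q) / (s + 1)) ^ (1 / q))) := by
        gcongr
        exact integral_abs_sub_midpoint_mul_abs_le_of_sConvexOn hs.1.le hpq' hab hint hconv
    _ = _ := by field_simp

theorem stmt_9 (I : Set ℝ) (f f' : ℝ → ℝ) (a b s p q : ℝ)
    (hab : a < b) (hI0 : I ⊆ Set.Ici (0:ℝ)) (hI : Set.Icc a b ⊆ interior I)
    (hs : s ∈ Set.Ioc (0:ℝ) 1) (hq : 1 < q) (hpq : 1/p + 1/q = 1)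
    (hder : ∀ x ∈ interior I, HasDerivAt f (f' x) x)
    (hint : IntervalIntegrable f' volume a b)
    (hconv : ∀ x ∈ Set.Icc a b, ∀ y ∈ Set.Icc a b, ∀ t ∈ Set.Icc (0:ℝ) 1,
      |f' (t * x + (1 - t) * y)| ^ q ≤ t ^ s * |f' x| ^ q + (1 - t) ^ s * |f' y| ^ q) :
    |(f a + f b)/2 - (1 / (b - a)) * ∫ x in a..b, f x|
      ≤ ((b - a)/4) * (1/(p+1)) ^ (1/p) *
        (((|f' ((a + b)/2)| ^ q + |f' a| ^ q) / (s+1)) ^ (1/q)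
          + ((|f' ((a + b)/2)| ^ q + |f' b| ^ q) / (s+1)) ^ (1/q)) :=
  stmt_9_general I f f' a b s p q hab hI hs hq hpq hder hint hconv
end

section
/- If |f'|^q is h-concave on [a,b] with h(1/2) > 0 and α ∈ [0,1], then ∫₀^{1-α} |f'(tb+(1-t)a)|^q dt ≤ ((1-α)/(2h(1/2))) |f'(((1-α)b+(1+α)a)/2)|^q. -/
/-! Pair each point `t` of `[0, 1 - α]` with its reflection `(1 - α) - t`. The two points
`x_t = t b + (1 - t) a` and `y_t = ((1 - α) - t) b + (α + t) a` have the same midpoint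
`((1 - α) b + (1 + α) a) / 2` for every `t`, so `h`-concavity at `1/2` bounds
`h(1/2) (g(x_t) + g(y_t))` by the value of `g` at that fixed midpoint. Integrating over `t`, the
reflection contributes the same integral again, which gives the factor `2 h(1/2)`. -/

open MeasureTheory

theorem integral_le_of_add_comp_sub_le {φ : ℝ → ℝ} {c k M : ℝ} (hc : 0 ≤ c) (hk : 0 < k)
    (hφ : IntervalIntegrable φ volume 0 c)
    (hle : ∀ t ∈ Set.Icc 0 c, k * φ t + k * φ (c - t) ≤ M) :
    ∫ t in 0..c, φ t ≤ c / (2 * k) * M := by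
  have hφ_refl : IntervalIntegrable (fun t => φ (c - t)) volume 0 c := by
    simpa using (hφ.comp_sub_left c).symm
  have hsum : ∫ t in 0..c, (k * φ t + k * φ (c - t)) = 2 * k * ∫ t in 0..c, φ t := by
    rw [intervalIntegral.integral_add (hφ.const_mul k) (hφ_refl.const_mul k),
      intervalIntegral.integral_const_mul, intervalIntegral.integral_const_mul,
      intervalIntegral.integral_comp_sub_left, sub_self, sub_zero]
    ring
  have hbound : ∫ t in 0..c, (k * φ t + k * φ (c - t)) ≤ c * M := by
    simpa using intervalIntegral.integral_mono_on hc ((hφ.const_mul k).add (hφ_refl.const_mul k))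
      intervalIntegrable_const hle
  rw [div_mul_eq_mul_div, le_div_iff₀ (by positivity)]
  linarith

theorem IntervalIntegrable.comp_segment {g : ℝ → ℝ} {a b : ℝ} (hab : a ≠ b)
    (hg : IntervalIntegrable g volume a b) :
    IntervalIntegrable (fun t => g (t * b + (1 - t) * a)) volume 0 1 := by
  have hba : b - a ≠ 0 := sub_ne_zero.mpr hab.symm
  have := (hg.comp_add_right a).comp_mul_right (c := b - a)
  simp only [sub_self, zero_div, div_self hba] at this
  refine this.congr fun t _ => ?_
  ring_nf

theorem segment_mem_Icc {a b t : ℝ} (hab : a ≤ b) (ht : t ∈ Set.Icc (0 : ℝ) 1) :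
    t * b + (1 - t) * a ∈ Set.Icc a b := by
  obtain ⟨ht0, ht1⟩ := ht
  constructor <;> nlinarith

theorem integral_comp_segment_le_of_midpoint {g : ℝ → ℝ} {a b c k : ℝ} (hab : a < b)
    (hc0 : 0 ≤ c) (hc1 : c ≤ 1) (hk : 0 < k) (hg : IntervalIntegrable g volume a b)
    (hmid : ∀ x ∈ Set.Icc a b, ∀ y ∈ Set.Icc a b, k * g x + k * g y ≤ g ((x + y) / 2)) :
    ∫ t in 0..c, g (t * b + (1 - t) * a) ≤ c / (2 * k) * g ((c * b + (2 - c) * a) / 2) := by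
  have hint : IntervalIntegrable (fun t => g (t * b + (1 - t) * a)) volume 0 c :=
    (hg.comp_segment hab.ne).mono_set <| by
      rw [Set.uIcc_of_le hc0, Set.uIcc_of_le zero_le_one]
      exact Set.Icc_subset_Icc le_rfl hc1
  refine integral_le_of_add_comp_sub_le hc0 hk hint fun t ⟨ht0, htc⟩ => ?_
  have hx := segment_mem_Icc hab.le ⟨ht0, htc.trans hc1⟩
  have hy := segment_mem_Icc (t := c - t) hab.le ⟨by linarith, by linarith⟩
  convert hmid _ hx _ hy using 2
  ring

theorem stmt_12_general (h f' : ℝ → ℝ) (a b α q : ℝ)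
    (hab : a < b) (hα : α ∈ Set.Icc (0:ℝ) 1)
    (hhalf : 0 < h (1/2))
    (hgint : IntervalIntegrable (fun x => |f' x| ^ q) volume a b)
    (hconc : ∀ x ∈ Set.Icc a b, ∀ y ∈ Set.Icc a b, ∀ t ∈ Set.Ioo (0:ℝ) 1,
      h t * |f' x| ^ q + h (1 - t) * |f' y| ^ q ≤ |f' (t * x + (1 - t) * y)| ^ q) :
    (∫ t in (0:ℝ)..(1 - α), |f' (t * b + (1 - t) * a)| ^ q)
      ≤ ((1 - α) / (2 * h (1/2))) * |f' (((1 - α) * b + (1 + α) * a) / 2)| ^ q := by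
  obtain ⟨hα0, hα1⟩ := hα
  have hmid : ∀ x ∈ Set.Icc a b, ∀ y ∈ Set.Icc a b,
      h (1/2) * |f' x| ^ q + h (1/2) * |f' y| ^ q ≤ |f' ((x + y) / 2)| ^ q := by
    intro x hx y hy
    convert hconc x hx y hy (1/2) (by norm_num) using 4 <;> ring
  convert integral_comp_segment_le_of_midpoint (c := 1 - α) hab (by linarith) (by linarith)
    hhalf hgint hmid using 6
  ring

theorem stmt_12 (h f' : ℝ → ℝ) (a b α q : ℝ)
    (hab : a < b) (hα : α ∈ Set.Icc (0:ℝ) 1)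
    (hh0 : ∀ t ∈ Set.Ioo (0:ℝ) 1, 0 ≤ h t) (hhalf : 0 < h (1/2))
    (hgint : IntervalIntegrable (fun x => |f' x| ^ q) volume a b)
    (hconc : ∀ x ∈ Set.Icc a b, ∀ y ∈ Set.Icc a b, ∀ t ∈ Set.Ioo (0:ℝ) 1,
      h t * |f' x| ^ q + h (1 - t) * |f' y| ^ q ≤ |f' (t * x + (1 - t) * y)| ^ q) :
    (∫ t in (0:ℝ)..(1 - α), |f' (t * b + (1 - t) * a)| ^ q)
      ≤ ((1 - α) / (2 * h (1/2))) * |f' (((1 - α) * b + (1 + α) * a) / 2)| ^ q :=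
  stmt_12_general h f' a b α q hab hα hhalf hgint hconc
end

section
/- Let f be differentiable on I° with f' integrable on [a,b], a < b, q > 1 with 1/p+1/q = 1, and |f'|^q concave on [a,b]. Then |f((a+b)/2) - (1/(b-a))∫ₐᵇ f(x)dx| ≤ ((b-a)/4)(1/(p+1))^{1/p}[|f'((3b+a)/4)| + |f'((3a+b)/4)|]. -/
/-!
Integration by parts against the kernel `x - a` on `[a, m]` and `b - x` on `[m, b]`, where `m` is
the midpoint, writes `f m` minus the mean of `f` as a weighted integral of `f'`. On each half,
Hölder's inequality separates the weight, whose `p`-norm is explicit, from `|f'|`, and the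
`q`-norm of `f'` is bounded by the right half of the Hermite–Hadamard inequality for the concave
function `|f'| ^ q`, which evaluates `f'` at the midpoint of that half, i.e. at a quarter point.
-/

open MeasureTheory Set

section Concave

variable {H : ℝ → ℝ} {c d : ℝ}

theorem ConcaveOn.add_apply_reflect_le (hH : ConcaveOn ℝ (Icc c d) H) {x : ℝ}
    (hx : x ∈ Icc c d) : H x + H (c + d - x) ≤ 2 * H ((c + d) / 2) := by
  have hx' : c + d - x ∈ Icc c d := ⟨by linarith [hx.2], by linarith [hx.1]⟩
  have h := hH.2 hx hx' (by norm_num : (0 : ℝ) ≤ 1 / 2) (by norm_num : (0 : ℝ) ≤ 1 / 2)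
    (by norm_num)
  rw [smul_eq_mul, smul_eq_mul, smul_eq_mul, smul_eq_mul,
    show 1 / 2 * x + 1 / 2 * (c + d - x) = (c + d) / 2 by ring] at h
  linarith

/-- The right half of the Hermite–Hadamard inequality for a concave function. -/
theorem ConcaveOn.integral_le_mul_apply_midpoint (hcd : c ≤ d) (hH : ConcaveOn ℝ (Icc c d) H)
    (hint : IntervalIntegrable H volume c d) :
    ∫ x in c..d, H x ≤ (d - c) * H ((c + d) / 2) := by
  have hreflect : ∫ x in c..d, H (c + d - x) = ∫ x in c..d, H x := by
    rw [intervalIntegral.integral_comp_sub_left, add_sub_cancel_right, add_sub_cancel_left]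
  have hint' : IntervalIntegrable (fun x => H (c + d - x)) volume c d := by
    simpa using (hint.comp_sub_left (c + d)).symm
  have hsum : ∫ x in c..d, (H x + H (c + d - x)) ≤ ∫ _ in c..d, 2 * H ((c + d) / 2) :=
    intervalIntegral.integral_mono_on hcd (hint.add hint') intervalIntegrable_const
      fun x hx => hH.add_apply_reflect_le hx
  rw [intervalIntegral.integral_add hint hint', hreflect, intervalIntegral.integral_const,
    smul_eq_mul] at hsum
  linarith

theorem ConcaveOn.intervalIntegrable_of_nonneg (hcd : c ≤ d) (hH : ConcaveOn ℝ (Icc c d) H)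
    (hH₀ : ∀ x ∈ Icc c d, 0 ≤ H x)
    (hm : AEStronglyMeasurable H (volume.restrict (Ioc c d))) :
    IntervalIntegrable H volume c d := by
  rw [intervalIntegrable_iff_integrableOn_Ioc_of_le hcd]
  refine Integrable.of_bound hm (2 * H ((c + d) / 2)) ?_
  filter_upwards [ae_restrict_mem measurableSet_Ioc] with x hx
  have hx' : x ∈ Icc c d := Ioc_subset_Icc_self hx
  have hx'' : c + d - x ∈ Icc c d := ⟨by linarith [hx'.2], by linarith [hx'.1]⟩
  rw [Real.norm_of_nonneg (hH₀ x hx')]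
  linarith [hH.add_apply_reflect_le hx', hH₀ _ hx'']

end Concave

theorem intervalIntegral.integral_mul_le_Lp_mul_Lq_of_nonneg {f g : ℝ → ℝ} {c d p q : ℝ}
    (hcd : c ≤ d) (hpq : p.HolderConjugate q)
    (hf₀ : ∀ x ∈ Icc c d, 0 ≤ f x) (hg₀ : ∀ x ∈ Icc c d, 0 ≤ g x)
    (hfm : AEStronglyMeasurable f (volume.restrict (Ioc c d)))
    (hgm : AEStronglyMeasurable g (volume.restrict (Ioc c d)))
    (hfp : IntervalIntegrable (fun x => f x ^ p) volume c d)
    (hgq : IntervalIntegrable (fun x => g x ^ q) volume c d) :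
    ∫ x in c..d, f x * g x
      ≤ (∫ x in c..d, f x ^ p) ^ (1 / p) * (∫ x in c..d, g x ^ q) ^ (1 / q) := by
  have hIoc : ∀ᵐ x ∂volume.restrict (Ioc c d), x ∈ Icc c d := by
    filter_upwards [ae_restrict_mem measurableSet_Ioc] with x hx using Ioc_subset_Icc_self hx
  have memLp {h : ℝ → ℝ} {r : ℝ} (hr : 0 < r) (h₀ : ∀ x ∈ Icc c d, 0 ≤ h x)
      (hm : AEStronglyMeasurable h (volume.restrict (Ioc c d)))
      (hr' : IntervalIntegrable (fun x => h x ^ r) volume c d) :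
      MemLp h (ENNReal.ofReal r) (volume.restrict (Ioc c d)) := by
    rw [← integrable_norm_rpow_iff hm (by simpa using hr) ENNReal.ofReal_ne_top,
      ENNReal.toReal_ofReal hr.le]
    refine ((intervalIntegrable_iff_integrableOn_Ioc_of_le hcd).1 hr').congr ?_
    filter_upwards [hIoc] with x hx
    rw [Real.norm_of_nonneg (h₀ x hx)]
  simp only [intervalIntegral.integral_of_le hcd]
  exact MeasureTheory.integral_mul_le_Lp_mul_Lq_of_nonneg hpq
    (hIoc.mono fun x hx => hf₀ x hx) (hIoc.mono fun x hx => hg₀ x hx)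
    (memLp hpq.pos hf₀ hfm hfp) (memLp hpq.symm.pos hg₀ hgm hgq)

theorem abs_integral_mul_le_of_concaveOn_abs_rpow {w g : ℝ → ℝ} {c d p q : ℝ} (hcd : c ≤ d)
    (hpq : p.HolderConjugate q) (hw₀ : ∀ x ∈ Icc c d, 0 ≤ w x)
    (hwm : AEStronglyMeasurable w (volume.restrict (Ioc c d)))
    (hwp : IntervalIntegrable (fun x => w x ^ p) volume c d)
    (hgm : AEStronglyMeasurable g (volume.restrict (Ioc c d)))
    (hg : ConcaveOn ℝ (Icc c d) fun x => |g x| ^ q) :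
    |∫ x in c..d, w x * g x|
      ≤ (∫ x in c..d, w x ^ p) ^ (1 / p) * (d - c) ^ (1 / q) * |g ((c + d) / 2)| := by
  have hq := hpq.symm.pos
  have hgq : IntervalIntegrable (fun x => |g x| ^ q) volume c d :=
    hg.intervalIntegrable_of_nonneg hcd (fun x _ => by positivity)
      (by fun_prop (disch := positivity))
  calc |∫ x in c..d, w x * g x|
      ≤ ∫ x in c..d, |w x * g x| := intervalIntegral.abs_integral_le_integral_abs hcd
    _ = ∫ x in c..d, w x * |g x| := by
        refine intervalIntegral.integral_congr fun x hx => ?_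
        rw [uIcc_of_le hcd] at hx
        simp only [abs_mul, abs_of_nonneg (hw₀ x hx)]
    _ ≤ (∫ x in c..d, w x ^ p) ^ (1 / p) * (∫ x in c..d, |g x| ^ q) ^ (1 / q) :=
        intervalIntegral.integral_mul_le_Lp_mul_Lq_of_nonneg hcd hpq hw₀
          (fun x _ => abs_nonneg _) hwm (by simpa only [Real.norm_eq_abs] using hgm.norm) hwp hgq
    _ ≤ (∫ x in c..d, w x ^ p) ^ (1 / p) * ((d - c) * |g ((c + d) / 2)| ^ q) ^ (1 / q) := by
        have hwp₀ : 0 ≤ ∫ x in c..d, w x ^ p :=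
          intervalIntegral.integral_nonneg hcd fun x hx => Real.rpow_nonneg (hw₀ x hx) p
        gcongr
        · exact intervalIntegral.integral_nonneg hcd fun x _ => by positivity
        · exact hg.integral_le_mul_apply_midpoint hcd hgq
    _ = (∫ x in c..d, w x ^ p) ^ (1 / p) * (d - c) ^ (1 / q) * |g ((c + d) / 2)| := by
        rw [Real.mul_rpow (sub_nonneg.2 hcd) (by positivity), ← Real.rpow_mul (abs_nonneg _),
          mul_one_div_cancel hq.ne', Real.rpow_one, mul_assoc]

theorem integral_sub_const_rpow {c d p : ℝ} (hp : -1 < p) :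
    ∫ x in c..d, (x - c) ^ p = (d - c) ^ (p + 1) / (p + 1) := by
  rw [intervalIntegral.integral_comp_sub_right (· ^ p), sub_self, integral_rpow (Or.inl hp),
    Real.zero_rpow (by linarith), sub_zero]

theorem integral_const_sub_rpow {c d p : ℝ} (hp : -1 < p) :
    ∫ x in c..d, (d - x) ^ p = (d - c) ^ (p + 1) / (p + 1) := by
  rw [intervalIntegral.integral_comp_sub_left (· ^ p), sub_self, integral_rpow (Or.inl hp),
    Real.zero_rpow (by linarith), sub_zero]

theorem Real.HolderConjugate.rpow_div_rpow_mul_rpow {p q : ℝ} (hpq : p.HolderConjugate q)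
    {ℓ : ℝ} (hℓ : 0 ≤ ℓ) :
    (ℓ ^ (p + 1) / (p + 1)) ^ (1 / p) * ℓ ^ (1 / q) = ℓ ^ 2 * (1 / (p + 1)) ^ (1 / p) := by
  have hp := hpq.pos
  have hexp : (p + 1) * (1 / p) + 1 / q = 2 := by
    have := hpq.inv_add_inv_eq_one
    field_simp at this ⊢
    linarith
  rw [div_eq_mul_one_div, Real.mul_rpow (by positivity) (by positivity), ← Real.rpow_mul hℓ,
    mul_right_comm, ← Real.rpow_add' hℓ (by rw [hexp]; norm_num), hexp, Real.rpow_two]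

section HalfEstimates

variable {g : ℝ → ℝ} {c d p q : ℝ}

theorem abs_integral_sub_const_mul_le (hcd : c ≤ d) (hpq : p.HolderConjugate q)
    (hgm : AEStronglyMeasurable g (volume.restrict (Ioc c d)))
    (hg : ConcaveOn ℝ (Icc c d) fun x => |g x| ^ q) :
    |∫ x in c..d, (x - c) * g x|
      ≤ (d - c) ^ 2 * (1 / (p + 1)) ^ (1 / p) * |g ((c + d) / 2)| := by
  have hp := hpq.pos
  have hwp : Continuous fun x => (x - c) ^ p :=
    (continuous_sub_right c).rpow_const fun _ => Or.inr hp.le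
  have h := abs_integral_mul_le_of_concaveOn_abs_rpow hcd hpq (fun x hx => sub_nonneg.2 hx.1)
    (by fun_prop) (hwp.intervalIntegrable c d) hgm hg
  rwa [integral_sub_const_rpow (by linarith), hpq.rpow_div_rpow_mul_rpow (sub_nonneg.2 hcd)] at h

theorem abs_integral_const_sub_mul_le (hcd : c ≤ d) (hpq : p.HolderConjugate q)
    (hgm : AEStronglyMeasurable g (volume.restrict (Ioc c d)))
    (hg : ConcaveOn ℝ (Icc c d) fun x => |g x| ^ q) :
    |∫ x in c..d, (d - x) * g x|
      ≤ (d - c) ^ 2 * (1 / (p + 1)) ^ (1 / p) * |g ((c + d) / 2)| := by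
  have hp := hpq.pos
  have hwp : Continuous fun x => (d - x) ^ p :=
    (continuous_sub_left d).rpow_const fun _ => Or.inr hp.le
  have h := abs_integral_mul_le_of_concaveOn_abs_rpow hcd hpq (fun x hx => sub_nonneg.2 hx.2)
    (by fun_prop) (hwp.intervalIntegrable c d) hgm hg
  rwa [integral_const_sub_rpow (by linarith), hpq.rpow_div_rpow_mul_rpow (sub_nonneg.2 hcd)] at h

end HalfEstimates

theorem integral_sub_const_mul_deriv_eq {f f' : ℝ → ℝ} {c d : ℝ} (e : ℝ)
    (hf : ∀ x ∈ uIcc c d, HasDerivAt f (f' x) x) (hf' : IntervalIntegrable f' volume c d) :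
    ∫ x in c..d, (x - e) * f' x = (d - e) * f d - (c - e) * f c - ∫ x in c..d, f x := by
  simpa using intervalIntegral.integral_mul_deriv_eq_deriv_mul
    (fun x _ => (hasDerivAt_id x).sub_const e) hf intervalIntegrable_const hf'

theorem midpoint_sub_average_eq {f f' : ℝ → ℝ} {a b : ℝ} (hab : a < b)
    (hf : ∀ x ∈ Icc a b, HasDerivAt f (f' x) x) (hf' : IntervalIntegrable f' volume a b) :
    f ((a + b) / 2) - 1 / (b - a) * ∫ x in a..b, f x
      = ((∫ x in a..(a + b) / 2, (x - a) * f' x) - ∫ x in (a + b) / 2..b, (b - x) * f' x)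
        / (b - a) := by
  set m := (a + b) / 2 with hm
  have hleft : uIcc a m ⊆ Icc a b := by
    rw [uIcc_of_le (by linarith)]; exact Icc_subset_Icc_right (by linarith)
  have hright : uIcc m b ⊆ Icc a b := by
    rw [uIcc_of_le (by linarith)]; exact Icc_subset_Icc_left (by linarith)
  have hab' : uIcc a b = Icc a b := uIcc_of_le hab.le
  have hfc : ContinuousOn f (Icc a b) := fun x hx => (hf x hx).continuousAt.continuousWithinAt
  have hsplit : (∫ x in a..m, f x) + ∫ x in m..b, f x = ∫ x in a..b, f x :=
    intervalIntegral.integral_add_adjacent_intervals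
      ((hfc.mono hleft).intervalIntegrable) ((hfc.mono hright).intervalIntegrable)
  have hA := integral_sub_const_mul_deriv_eq a (fun x hx => hf x (hleft hx))
    (hf'.mono_set (hab' ▸ hleft))
  have hB := integral_sub_const_mul_deriv_eq b (fun x hx => hf x (hright hx))
    (hf'.mono_set (hab' ▸ hright))
  have hB' : ∫ x in m..b, (b - x) * f' x = -∫ x in m..b, (x - b) * f' x := by
    rw [← intervalIntegral.integral_neg]; congr 1; ext x; ring
  have hba : b - a ≠ 0 := (sub_pos.2 hab).ne'
  rw [hA, hB', hB, ← hsplit]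
  field_simp
  ring

theorem stmt_14 (I : Set ℝ) (f f' : ℝ → ℝ) (a b p q : ℝ)
    (hab : a < b) (hI : Set.Icc a b ⊆ interior I)
    (hq : 1 < q) (hpq : 1/p + 1/q = 1)
    (hder : ∀ x ∈ interior I, HasDerivAt f (f' x) x)
    (hint : IntervalIntegrable f' volume a b)
    (hconc : ConcaveOn ℝ (Set.Icc a b) (fun x => |f' x| ^ q)) :
    |f ((a + b)/2) - (1 / (b - a)) * ∫ x in a..b, f x|
      ≤ ((b - a)/4) * (1/(p+1)) ^ (1/p) *
        (|f' ((3*b + a)/4)| + |f' ((3*a + b)/4)|) := by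
  have hpq' : p.HolderConjugate q :=
    (Real.holderConjugate_iff.2 ⟨hq, by simpa only [one_div, add_comm] using hpq⟩).symm
  set m := (a + b) / 2 with hm
  have ham : a ≤ m := by linarith
  have hmb : m ≤ b := by linarith
  have hf' : AEStronglyMeasurable f' (volume.restrict (Ioc a b)) := hint.1.aestronglyMeasurable
  have hleft := abs_integral_sub_const_mul_le ham hpq'
    (hf'.mono_measure (Measure.restrict_mono (Ioc_subset_Ioc_right hmb) le_rfl))
    (hconc.subset (Icc_subset_Icc_right hmb) (convex_Icc a m))
  have hright := abs_integral_const_sub_mul_le hmb hpq'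
    (hf'.mono_measure (Measure.restrict_mono (Ioc_subset_Ioc_left ham) le_rfl))
    (hconc.subset (Icc_subset_Icc_left ham) (convex_Icc m b))
  rw [midpoint_sub_average_eq hab (fun x hx => hder x (hI hx)) hint, abs_div,
    abs_of_pos (sub_pos.2 hab)]
  rw [show (a + m) / 2 = (3 * a + b) / 4 by ring, show m - a = (b - a) / 2 by ring] at hleft
  rw [show (m + b) / 2 = (3 * b + a) / 4 by ring, show b - m = (b - a) / 2 by ring] at hright
  calc _ ≤ (|∫ x in a..m, (x - a) * f' x| + |∫ x in m..b, (b - x) * f' x|) / (b - a) := by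
        gcongr; exact abs_sub _ _
    _ ≤ _ := div_le_div_of_nonneg_right (add_le_add hleft hright) (sub_pos.2 hab).le
    _ = _ := by field_simp; ring
end
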